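/- arXiv:2401.16539 — 12 statements merged into one kernel-verified Lean document; each statement's English description precedes it below -/
import Mathlib

section
/- Let H be a complex Hilbert space, 𝒱 and 𝒲 closed subspaces with H = 𝒱 ⊕ 𝒲ᗮ, and P = π_{𝒱,𝒲ᗮ}. Let (W,w) be a fusion Bessel sequence with every W_i ⊆ 𝒲 and synthesis operator T_W, let (V,v) be a fusion Bessel sequence with every V_i ⊆ 𝒱 and synthesis operator T_V, and let Q : K_W → K_V be a bounded operator. If ‖T_V Q T_W* − P‖ ≤ ε for some ε < 1, then the range of T_W equals 𝒲 and the range of T_V equals 𝒱; i.e., (W,w) is a fusion frame for 𝒲 and (V,v) is a fusion frame for 𝒱. -/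
/-!
`T_V Q T_W*` maps into `𝒱` and is `ε`-close to `P`, which is the identity on `𝒱`. Restricted to
`𝒱` it is therefore a Neumann-series perturbation of the identity of the Banach space `𝒱`, hence
invertible there, so already `T_V` maps onto `𝒱`. Taking adjoints, `T_W Q* T_V*` maps into `𝒲` and
is `ε`-close to `P*`, which is the identity on `𝒲` because `ker P = 𝒲ᗮ`; the same argument shows
that `T_W` maps onto `𝒲`.
-/

open scoped ENNReal
open ContinuousLinearMap

theorem HasSum.mem_of_isClosed {ι E S : Type*} [AddCommMonoid E] [TopologicalSpace E]
    [SetLike S E] [AddSubmonoidClass S E] {s : S} {f : ι → E} {a : E} (h : HasSum f a)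
    (hs : IsClosed (s : Set E)) (hf : ∀ i, f i ∈ s) : a ∈ s :=
  hs.mem_of_tendsto h (.of_forall fun _ => sum_mem fun i _ => hf i)

theorem range_le_of_hasSum_smul {𝕜 H ι : Type*} [NormedField 𝕜] [NormedAddCommGroup H]
    [NormedSpace 𝕜 H] {p : ℝ≥0∞} [Fact (1 ≤ p)] {W : ι → Submodule 𝕜 H} {𝒲 : Submodule 𝕜 H}
    (h𝒲 : IsClosed (𝒲 : Set H)) (hW : ∀ i, W i ≤ 𝒲) (c : ι → 𝕜)
    (T : lp (fun i => W i) p →L[𝕜] H) (hT : ∀ g, HasSum (fun i => c i • (g i : H)) (T g)) :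
    LinearMap.range (T : lp (fun i => W i) p →ₗ[𝕜] H) ≤ 𝒲 := by
  rintro _ ⟨g, rfl⟩
  exact (hT g).mem_of_isClosed h𝒲 fun i => 𝒲.smul_mem _ (hW i (g i).2)

theorem Submodule.le_range_of_norm_sub_lt_one {𝕜 E : Type*} [NontriviallyNormedField 𝕜]
    [NormedAddCommGroup E] [NormedSpace 𝕜 E] {U : Submodule 𝕜 E} [CompleteSpace U]
    {D R : E →L[𝕜] E} (hD : ∀ x, D x ∈ U) (hR : ∀ x ∈ U, R x = x) (h : ‖D - R‖ < 1) :
    U ≤ LinearMap.range (D : E →ₗ[𝕜] E) := by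
  set S : U →L[𝕜] U := (D ∘L U.subtypeL).codRestrict U fun x => hD x
  have hS : ‖1 - S‖ < 1 := by
    refine lt_of_le_of_lt (opNorm_le_bound _ (norm_nonneg _) fun x => ?_) h
    have hSx : (((1 - S) x : U) : E) = R x - D x := by rw [hR x x.2]; rfl
    calc ‖(1 - S) x‖ = ‖(D - R) x‖ := by rw [← Submodule.norm_coe, hSx, norm_sub_rev]; rfl
      _ ≤ ‖D - R‖ * ‖x‖ := le_opNorm _ _
  have hSunit : IsUnit S := by simpa using (Units.oneSub (1 - S) hS).isUnit
  intro y hy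
  obtain ⟨x, hx⟩ := (isUnit_iff_bijective.mp hSunit).surjective ⟨y, hy⟩
  exact ⟨x, congrArg Subtype.val hx⟩

theorem IsIdempotentElem.adjoint_apply_eq_self {𝕜 E : Type*} [RCLike 𝕜] [NormedAddCommGroup E]
    [InnerProductSpace 𝕜 E] [CompleteSpace E] {P : E →L[𝕜] E} (hP : IsIdempotentElem P)
    {K : Submodule 𝕜 E} (hker : LinearMap.ker (P : E →ₗ[𝕜] E) ≤ Kᗮ) {x : E} (hx : x ∈ K) :
    adjoint P x = x := by
  refine ext_inner_right 𝕜 fun y => ?_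
  have hy : P y - y ∈ Kᗮ := hker <| by
    simpa [sub_eq_zero] using congr($hP y)
  rw [adjoint_inner_left, ← sub_eq_zero, ← inner_sub_right]
  exact Submodule.inner_right_of_mem_orthogonal hx hy

theorem fusionBessel_isFusionFrame_of_approx_dual_general
    {H : Type*} [NormedAddCommGroup H] [InnerProductSpace ℂ H] [CompleteSpace H]
    {I : Type*}
    (𝒱 𝒲 : Submodule ℂ H) [CompleteSpace 𝒱] [CompleteSpace 𝒲]
    (P : H →L[ℂ] H) (hPidem : P ∘L P = P)
    (hPran : LinearMap.range (P : H →ₗ[ℂ] H) = 𝒱) (hPker : LinearMap.ker (P : H →ₗ[ℂ] H) = 𝒲ᗮ)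
    (W : I → Submodule ℂ H) [∀ i, CompleteSpace (W i)] (hW : ∀ i, W i ≤ 𝒲)
    (w : I → ℝ)
    (TW : lp (fun i => W i) 2 →L[ℂ] H)
    (hTW : ∀ g : lp (fun i => W i) 2, HasSum (fun i => (w i : ℂ) • (g i : H)) (TW g))
    (V : I → Submodule ℂ H) [∀ i, CompleteSpace (V i)] (hV : ∀ i, V i ≤ 𝒱)
    (v : I → ℝ)
    (TV : lp (fun i => V i) 2 →L[ℂ] H)
    (hTV : ∀ g : lp (fun i => V i) 2, HasSum (fun i => (v i : ℂ) • (g i : H)) (TV g))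
    (Q : lp (fun i => W i) 2 →L[ℂ] lp (fun i => V i) 2)
    (ε : ℝ) (hε : ε < 1)
    (hdual : ‖TV ∘L Q ∘L ContinuousLinearMap.adjoint TW - P‖ ≤ ε) :
    LinearMap.range (TW : lp (fun i => W i) 2 →ₗ[ℂ] H) = 𝒲 ∧ LinearMap.range (TV : lp (fun i => V i) 2 →ₗ[ℂ] H) = 𝒱 := by
  have hP : IsIdempotentElem P := hPidem
  have hTW_le := range_le_of_hasSum_smul
    (completeSpace_coe_iff_isComplete.mp ‹CompleteSpace 𝒲›).isClosed hW _ TW hTW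
  have hTV_le := range_le_of_hasSum_smul
    (completeSpace_coe_iff_isComplete.mp ‹CompleteSpace 𝒱›).isClosed hV _ TV hTV
  have hdual_lt : ‖TV ∘L Q ∘L adjoint TW - P‖ < 1 := hdual.trans_lt hε
  have hdual_adjoint_lt : ‖TW ∘L adjoint Q ∘L adjoint TV - adjoint P‖ < 1 := by
    simpa [adjoint_comp, comp_assoc] using
      (LinearIsometryEquiv.norm_map adjoint _).trans_lt hdual_lt
  have hP_fix : ∀ x ∈ 𝒱, P x = x := fun x hx =>
    (LinearMap.IsIdempotentElem.mem_range_iff hP.toLinearMap).mp (hPran ▸ hx)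
  have hP_adjoint_fix : ∀ x ∈ 𝒲, adjoint P x = x := fun x hx =>
    hP.adjoint_apply_eq_self hPker.le hx
  refine ⟨hTW_le.antisymm ?_, hTV_le.antisymm ?_⟩
  · exact (Submodule.le_range_of_norm_sub_lt_one (fun _ => hTW_le ⟨_, rfl⟩) hP_adjoint_fix
      hdual_adjoint_lt).trans (LinearMap.range_comp_le_range _ _)
  · exact (Submodule.le_range_of_norm_sub_lt_one (fun _ => hTV_le ⟨_, rfl⟩) hP_fix
      hdual_lt).trans (LinearMap.range_comp_le_range _ _)

/-- If `(W,w)` and `(V,v)` are fusion Bessel sequences (with subspaces inside `𝒲` and `𝒱`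
respectively) and `‖T_V Q T_W* − P‖ ≤ ε < 1` for the oblique projection `P = π_{𝒱,𝒲ᗮ}`,
then `T_W` has range `𝒲` and `T_V` has range `𝒱`; i.e. `(W,w)` is a fusion frame for `𝒲`
and `(V,v)` is a fusion frame for `𝒱`. -/
theorem fusionBessel_isFusionFrame_of_approx_dual
    {H : Type*} [NormedAddCommGroup H] [InnerProductSpace ℂ H] [CompleteSpace H]
    {I : Type*} [Countable I]
    (𝒱 𝒲 : Submodule ℂ H) [CompleteSpace 𝒱] [CompleteSpace 𝒲]
    (P : H →L[ℂ] H) (hPidem : P ∘L P = P)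
    (hPran : LinearMap.range (P : H →ₗ[ℂ] H) = 𝒱) (hPker : LinearMap.ker (P : H →ₗ[ℂ] H) = 𝒲ᗮ)
    (W : I → Submodule ℂ H) [∀ i, CompleteSpace (W i)] (hW : ∀ i, W i ≤ 𝒲)
    (w : I → ℝ) (hw : ∀ i, 0 < w i)
    (TW : lp (fun i => W i) 2 →L[ℂ] H)
    (hTW : ∀ g : lp (fun i => W i) 2, HasSum (fun i => (w i : ℂ) • (g i : H)) (TW g))
    (V : I → Submodule ℂ H) [∀ i, CompleteSpace (V i)] (hV : ∀ i, V i ≤ 𝒱)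
    (v : I → ℝ) (hv : ∀ i, 0 < v i)
    (TV : lp (fun i => V i) 2 →L[ℂ] H)
    (hTV : ∀ g : lp (fun i => V i) 2, HasSum (fun i => (v i : ℂ) • (g i : H)) (TV g))
    (Q : lp (fun i => W i) 2 →L[ℂ] lp (fun i => V i) 2)
    (ε : ℝ) (hε : ε < 1)
    (hdual : ‖TV ∘L Q ∘L ContinuousLinearMap.adjoint TW - P‖ ≤ ε) :
    LinearMap.range (TW : lp (fun i => W i) 2 →ₗ[ℂ] H) = 𝒲 ∧ LinearMap.range (TV : lp (fun i => V i) 2 →ₗ[ℂ] H) = 𝒱 :=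
  fusionBessel_isFusionFrame_of_approx_dual_general 𝒱 𝒲 P hPidem hPran hPker W hW w TW hTW V hV v TV
    hTV Q ε hε hdual
end

section
/- Let H be a complex Hilbert space, 𝒱 and 𝒲 closed subspaces with H = 𝒱 ⊕ 𝒲ᗮ, and P = π_{𝒱,𝒲ᗮ}. Let (W,w) be a fusion frame for 𝒲 with synthesis operator T_W, let (V,v) be a fusion frame for 𝒱 with synthesis operator T_V, and let Q : K_W → K_V be a bounded operator with ‖T_V Q T_W* − P‖ ≤ ε for some ε < 1. Set S = T_V Q T_W*. Then S maps H into 𝒱, the restriction S|_𝒱 : 𝒱 → 𝒱 is a bijective bounded operator, and its inverse A : 𝒱 → 𝒱 satisfies A(S f) = P f for every f ∈ H (note S f ∈ 𝒱 and P f ∈ 𝒱). -/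
/-!
On `𝒱` the idempotent `P` is the identity, so `‖1 - S|_𝒱‖ ≤ ‖S - P‖ ≤ ε < 1` and `S|_𝒱`
is invertible by the Neumann series. Since `ker P = 𝒲ᗮ = (range T_W)ᗮ = ker T_W*`, we have
`S ∘ P = S`; as `P f ∈ 𝒱`, this gives `A (S f) = A (S|_𝒱 (P f)) = P f`.
-/

namespace ContinuousLinearMap

section Restriction

variable {𝕜 E : Type*} [NontriviallyNormedField 𝕜] [NormedAddCommGroup E] [NormedSpace 𝕜 E]
  {𝒱 : Submodule 𝕜 E} {S P : E →L[𝕜] E}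

theorem norm_one_sub_codRestrict_domRestrict_le (hS : ∀ x, S x ∈ 𝒱) (hP : ∀ x ∈ 𝒱, P x = x) :
    ‖1 - (S.domRestrict 𝒱).codRestrict 𝒱 (fun x => hS x)‖ ≤ ‖S - P‖ := by
  set R := (S.domRestrict 𝒱).codRestrict 𝒱 (fun x => hS x)
  refine opNorm_le_bound _ (norm_nonneg _) fun x => ?_
  have hx : ((1 - R) x : E) = -(S - P) x := by
    change (x : E) - S x = -(S x - P x)
    rw [hP x x.2, neg_sub]
  calc ‖(1 - R) x‖ = ‖(S - P) x‖ := by rw [← Submodule.norm_coe, hx, norm_neg]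
    _ ≤ ‖S - P‖ * ‖x‖ := le_opNorm _ _

theorem exists_continuousLinearEquiv_of_norm_sub_lt_one [CompleteSpace 𝒱]
    (hS : ∀ x, S x ∈ 𝒱) (hP : ∀ x ∈ 𝒱, P x = x) (hSP : ‖S - P‖ < 1) :
    ∃ e : 𝒱 ≃L[𝕜] 𝒱, ∀ x : 𝒱, (e x : E) = S x := by
  set R := (S.domRestrict 𝒱).codRestrict 𝒱 (fun x => hS x)
  let u := Units.oneSub (1 - R) ((norm_one_sub_codRestrict_domRestrict_le hS hP).trans_lt hSP)
  refine ⟨ContinuousLinearEquiv.unitsEquiv 𝕜 𝒱 u, fun x => ?_⟩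
  simp only [ContinuousLinearEquiv.unitsEquiv_apply, u, Units.val_oneSub, sub_sub_cancel]
  rfl

end Restriction

theorem adjoint_apply_idempotent_apply {𝕜 E F : Type*} [RCLike 𝕜]
    [NormedAddCommGroup E] [InnerProductSpace 𝕜 E] [CompleteSpace E]
    [NormedAddCommGroup F] [InnerProductSpace 𝕜 F] [CompleteSpace F]
    {T : E →L[𝕜] F} {P : F →L[𝕜] F} (hP : IsIdempotentElem P)
    (hker : LinearMap.ker (P : F →ₗ[𝕜] F) ≤ (LinearMap.range (T : E →ₗ[𝕜] F))ᗮ) (f : F) :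
    adjoint T (P f) = adjoint T f := by
  have hcomp := (LinearMap.IsIdempotentElem.comp_eq_left_iff (IsIdempotentElem.toLinearMap hP)
    (adjoint T : F →ₗ[𝕜] E)).mpr (T.orthogonal_range ▸ hker)
  exact LinearMap.congr_fun hcomp f

end ContinuousLinearMap

open ContinuousLinearMap in
theorem approx_dual_restriction_invertible_general
    {H : Type*} [NormedAddCommGroup H] [InnerProductSpace ℂ H] [CompleteSpace H]
    {I : Type*}
    (𝒱 𝒲 : Submodule ℂ H) [CompleteSpace 𝒱]
    (P : H →L[ℂ] H) (hPidem : P ∘L P = P)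
    (hPran : LinearMap.range (P : H →ₗ[ℂ] H) = 𝒱) (hPker : LinearMap.ker (P : H →ₗ[ℂ] H) = 𝒲ᗮ)
    (W : I → Submodule ℂ H) [∀ i, CompleteSpace (W i)]
    (TW : lp (fun i => W i) 2 →L[ℂ] H)
    (hWfr : LinearMap.range (TW : lp (fun i => W i) 2 →ₗ[ℂ] H) = 𝒲)
    (V : I → Submodule ℂ H)
    (TV : lp (fun i => V i) 2 →L[ℂ] H)
    (hVfr : LinearMap.range (TV : lp (fun i => V i) 2 →ₗ[ℂ] H) = 𝒱)
    (Q : lp (fun i => W i) 2 →L[ℂ] lp (fun i => V i) 2)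
    (ε : ℝ) (hε : ε < 1)
    (hdual : ‖TV ∘L Q ∘L ContinuousLinearMap.adjoint TW - P‖ ≤ ε) :
    (∀ f : H, (TV ∘L Q ∘L ContinuousLinearMap.adjoint TW) f ∈ 𝒱) ∧
    ∃ S' : 𝒱 →L[ℂ] 𝒱,
      (∀ x : 𝒱, (S' x : H) = (TV ∘L Q ∘L ContinuousLinearMap.adjoint TW) (x : H)) ∧
      Function.Bijective S' ∧
      ∃ A : 𝒱 →L[ℂ] 𝒱,
        (∀ x : 𝒱, A (S' x) = x ∧ S' (A x) = x) ∧
        ∀ (f : H) (hf : (TV ∘L Q ∘L ContinuousLinearMap.adjoint TW) f ∈ 𝒱),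
          (A ⟨(TV ∘L Q ∘L ContinuousLinearMap.adjoint TW) f, hf⟩ : H) = P f := by
  have hP : IsIdempotentElem P := hPidem
  have hSmem : ∀ f, TV (Q (adjoint TW f)) ∈ 𝒱 := fun f => hVfr ▸ ⟨_, rfl⟩
  have hPfix : ∀ x ∈ 𝒱, P x = x := fun x hx =>
    (LinearMap.IsIdempotentElem.mem_range_iff hP.toLinearMap).mp (hPran ▸ hx)
  obtain ⟨e, he⟩ :=
    exists_continuousLinearEquiv_of_norm_sub_lt_one hSmem hPfix (hdual.trans_lt hε)
  refine ⟨hSmem, e, he, e.bijective, e.symm,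
    fun x => ⟨e.symm_apply_apply x, e.apply_symm_apply x⟩, fun f hf => ?_⟩
  have he_P :
      e ⟨P f, hPran ▸ LinearMap.mem_range_self _ f⟩ = ⟨(TV ∘L Q ∘L adjoint TW) f, hf⟩ := by
    ext
    rw [he]
    exact congrArg (TV ∘L Q) (adjoint_apply_idempotent_apply hP (hPker ▸ hWfr ▸ le_rfl) f)
  rw [← he_P]
  exact congrArg Subtype.val (e.symm_apply_apply _)

/-- If `(V,v)` is an `ε`-approximate oblique `Q`-dual fusion frame of `(W,w)` on `𝒱` with
`ε < 1`, then `S = T_V Q T_W*` maps `H` into `𝒱`, its restriction `S|_𝒱 : 𝒱 → 𝒱` is a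
bijective bounded operator, and the inverse `A` of this restriction satisfies
`A (S f) = P f` for every `f ∈ H`, where `P = π_{𝒱,𝒲ᗮ}`. -/
theorem approx_dual_restriction_invertible
    {H : Type*} [NormedAddCommGroup H] [InnerProductSpace ℂ H] [CompleteSpace H]
    {I : Type*} [Countable I]
    (𝒱 𝒲 : Submodule ℂ H) [CompleteSpace 𝒱] [CompleteSpace 𝒲]
    (P : H →L[ℂ] H) (hPidem : P ∘L P = P)
    (hPran : LinearMap.range (P : H →ₗ[ℂ] H) = 𝒱) (hPker : LinearMap.ker (P : H →ₗ[ℂ] H) = 𝒲ᗮ)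
    (W : I → Submodule ℂ H) [∀ i, CompleteSpace (W i)] (hW : ∀ i, W i ≤ 𝒲)
    (w : I → ℝ) (hw : ∀ i, 0 < w i)
    (TW : lp (fun i => W i) 2 →L[ℂ] H)
    (hTW : ∀ g : lp (fun i => W i) 2, HasSum (fun i => (w i : ℂ) • (g i : H)) (TW g))
    (hWfr : LinearMap.range (TW : lp (fun i => W i) 2 →ₗ[ℂ] H) = 𝒲)
    (V : I → Submodule ℂ H) [∀ i, CompleteSpace (V i)] (hV : ∀ i, V i ≤ 𝒱)
    (v : I → ℝ) (hv : ∀ i, 0 < v i)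
    (TV : lp (fun i => V i) 2 →L[ℂ] H)
    (hTV : ∀ g : lp (fun i => V i) 2, HasSum (fun i => (v i : ℂ) • (g i : H)) (TV g))
    (hVfr : LinearMap.range (TV : lp (fun i => V i) 2 →ₗ[ℂ] H) = 𝒱)
    (Q : lp (fun i => W i) 2 →L[ℂ] lp (fun i => V i) 2)
    (ε : ℝ) (hε : ε < 1)
    (hdual : ‖TV ∘L Q ∘L ContinuousLinearMap.adjoint TW - P‖ ≤ ε) :
    (∀ f : H, (TV ∘L Q ∘L ContinuousLinearMap.adjoint TW) f ∈ 𝒱) ∧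
    ∃ S' : 𝒱 →L[ℂ] 𝒱,
      (∀ x : 𝒱, (S' x : H) = (TV ∘L Q ∘L ContinuousLinearMap.adjoint TW) (x : H)) ∧
      Function.Bijective S' ∧
      ∃ A : 𝒱 →L[ℂ] 𝒱,
        (∀ x : 𝒱, A (S' x) = x ∧ S' (A x) = x) ∧
        ∀ (f : H) (hf : (TV ∘L Q ∘L ContinuousLinearMap.adjoint TW) f ∈ 𝒱),
          (A ⟨(TV ∘L Q ∘L ContinuousLinearMap.adjoint TW) f, hf⟩ : H) = P f :=
  approx_dual_restriction_invertible_general 𝒱 𝒲 P hPidem hPran hPker W TW hWfr V TV hVfr Q ε hε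
    hdual
end

section
/- Let H be a complex Hilbert space, (W,w) a fusion Bessel sequence with ℓ²-direct sum K_W, and 𝒱 a closed subspace of H. Let L : K_W → H be a bounded operator with range contained in 𝒱, and let (v_i)_{i∈I} be weights. Suppose there exists δ > 0 such that δ ≤ v_i⁻¹ γ(L ∘ M_i) for all i ∈ I. Then for each i the subspace V_i := L(M_i(K_W)) is closed, and (V_i, v_i)_{i∈I} is a fusion Bessel sequence for 𝒱 with upper Bessel bound ‖L‖²/δ²; that is, Σ_{i∈I} v_i² ‖π_{V_i} f‖² ≤ (‖L‖²/δ²) ‖f‖² for all f ∈ H. -/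
open scoped ENNReal
set_option synthInstance.maxHeartbeats 1000000
set_option maxHeartbeats 1000000
noncomputable section

/-- Reduced minimum modulus of a bounded operator between inner product spaces:
`γ(A) = inf {‖A x‖ : ‖x‖ = 1, x ∈ (ker A)ᗮ}`. -/
def redMinMod {E F : Type*} [NormedAddCommGroup E] [InnerProductSpace ℂ E]
    [NormedAddCommGroup F] [InnerProductSpace ℂ F] (A : E →L[ℂ] F) : ℝ :=
  sInf ((fun x => ‖A x‖) '' {x : E | ‖x‖ = 1 ∧ x ∈ (LinearMap.ker (A : E →ₗ[ℂ] F))ᗮ})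

/-!
For `x ∈ (ker A)ᗮ` one has `γ(A) ‖x‖ ≤ ‖A x‖`, and every value of `A` is attained on `(ker A)ᗮ`;
so `γ(A) > 0` makes `A` antilipschitz on `(ker A)ᗮ`, and its range is closed.

Since `M_i g = e_i (g_i)` for the embedding `e_i : W_i → K_W`, each `π_{V_i} f` is
`L (e_i z_i)` with `δ v_i ‖z_i‖ ≤ ‖π_{V_i} f‖`. The vectors `e_i z_i` are orthogonal, so
`x = ∑_{i∈s} (δ v_i)² e_i z_i` has `‖x‖² ≤ S := ∑_{i∈s} (δ v_i)² ‖π_{V_i} f‖²`, while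
`S = re ⟪L x, f⟫ ≤ ‖L‖ ‖f‖ ‖x‖`. Together these give `S ≤ ‖L‖² ‖f‖²` for every finite `s`.
-/

open RCLike
open scoped InnerProductSpace

lemma pos_and_mul_le_of_le_inv_mul {δ v r : ℝ} (hδ : 0 < δ) (hr : 0 ≤ r) (h : δ ≤ v⁻¹ * r) :
    0 < v ∧ δ * v ≤ r := by
  have hv : 0 < v := by
    by_contra! hv
    exact hδ.not_ge (h.trans (mul_nonpos_of_nonpos_of_nonneg (inv_nonpos.mpr hv) hr))
  exact ⟨hv, mul_comm v δ ▸ (le_inv_mul_iff₀ hv).mp h⟩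

section ReducedMinimumModulus

variable {E F : Type*} [NormedAddCommGroup E] [InnerProductSpace ℂ E]
  [NormedAddCommGroup F] [InnerProductSpace ℂ F]

lemma redMinMod_nonneg (A : E →L[ℂ] F) : 0 ≤ redMinMod A :=
  Real.sInf_nonneg (by rintro _ ⟨x, -, rfl⟩; exact norm_nonneg _)

lemma redMinMod_mul_norm_le (A : E →L[ℂ] F) {x : E}
    (hx : x ∈ (LinearMap.ker (A : E →ₗ[ℂ] F))ᗮ) : redMinMod A * ‖x‖ ≤ ‖A x‖ := by
  rcases eq_or_ne x 0 with rfl | hx0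
  · simp
  have hnx : 0 < ‖x‖ := norm_pos_iff.mpr hx0
  set u : E := ((‖x‖ : ℂ))⁻¹ • x
  have hu : u ∈ {x : E | ‖x‖ = 1 ∧ x ∈ (LinearMap.ker (A : E →ₗ[ℂ] F))ᗮ} :=
    ⟨by simp [u, norm_smul, hnx.ne'], Submodule.smul_mem _ _ hx⟩
  have hbdd : BddBelow ((fun x => ‖A x‖) ''
      {x : E | ‖x‖ = 1 ∧ x ∈ (LinearMap.ker (A : E →ₗ[ℂ] F))ᗮ}) :=
    ⟨0, by rintro _ ⟨y, -, rfl⟩; exact norm_nonneg _⟩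
  have hAu : ‖A u‖ = ‖x‖⁻¹ * ‖A x‖ := by simp [u, norm_smul]
  have := csInf_le hbdd (Set.mem_image_of_mem _ hu)
  rwa [← redMinMod, hAu, ← div_eq_inv_mul, le_div_iff₀ hnx] at this

variable [CompleteSpace E]

lemma exists_mem_orthogonal_ker_apply_eq (A : E →L[ℂ] F) (x : E) :
    ∃ x' ∈ (LinearMap.ker (A : E →ₗ[ℂ] F))ᗮ, A x' = A x := by
  have : CompleteSpace (LinearMap.ker (A : E →ₗ[ℂ] F)) := A.isClosed_ker.completeSpace_coe
  obtain ⟨p, hp, q, hq, rfl⟩ := (LinearMap.ker (A : E →ₗ[ℂ] F)).exists_add_mem_mem_orthogonal x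
  exact ⟨q, hq, by rw [map_add, show A p = 0 from hp, zero_add]⟩

lemma exists_apply_eq_and_redMinMod_mul_norm_le (A : E →L[ℂ] F) {y : F}
    (hy : y ∈ LinearMap.range (A : E →ₗ[ℂ] F)) : ∃ x, A x = y ∧ redMinMod A * ‖x‖ ≤ ‖y‖ := by
  obtain ⟨x, rfl⟩ := hy
  obtain ⟨x', hx', hAx'⟩ := exists_mem_orthogonal_ker_apply_eq A x
  exact ⟨x', hAx', hAx' ▸ redMinMod_mul_norm_le A hx'⟩

lemma isClosed_range_of_redMinMod_pos (A : E →L[ℂ] F) (hA : 0 < redMinMod A) :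
    IsClosed (LinearMap.range (A : E →ₗ[ℂ] F) : Set F) := by
  set N := (LinearMap.ker (A : E →ₗ[ℂ] F))ᗮ
  have : CompleteSpace N := (LinearMap.ker (A : E →ₗ[ℂ] F)).isClosed_orthogonal.completeSpace_coe
  set B : N →L[ℂ] F := A ∘L N.subtypeL
  have hB : AntilipschitzWith (redMinMod A)⁻¹.toNNReal B := by
    refine B.antilipschitz_of_bound fun x => ?_
    rw [Real.coe_toNNReal _ (inv_nonneg.mpr hA.le), ← div_eq_inv_mul, le_div_iff₀' hA]
    exact redMinMod_mul_norm_le A x.2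
  have hrange : Set.range B = LinearMap.range (A : E →ₗ[ℂ] F) := by
    ext y
    constructor
    · rintro ⟨x, rfl⟩
      exact ⟨x, rfl⟩
    · rintro ⟨x, rfl⟩
      obtain ⟨x', hx', hAx'⟩ := exists_mem_orthogonal_ker_apply_eq A x
      exact ⟨⟨x', hx'⟩, hAx'⟩
  exact hrange ▸ hB.isClosed_range B.uniformContinuous

end ReducedMinimumModulus

section lp

variable {𝕜 ι : Type*} [RCLike 𝕜] [DecidableEq ι] {G : ι → Type*}

lemma lp.eq_single_of_apply_eq_ite [∀ i, NormedAddCommGroup (G i)] {p : ℝ≥0∞} {g m : lp G p}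
    {i : ι} (h : ∀ j, m j = if j = i then g j else 0) : m = lp.single p i (g i) := by
  ext j
  rw [h]
  split_ifs with hji
  · subst hji
    exact (lp.single_apply_self p j (g j)).symm
  · exact (lp.single_apply_ne p i (g i) hji).symm

variable [∀ i, NormedAddCommGroup (G i)] [∀ i, InnerProductSpace 𝕜 (G i)]

variable (𝕜 G) in
def lp.singleₗᵢ (i : ι) : G i →ₗᵢ[𝕜] lp G 2 :=
  { lp.lsingle 2 i with norm_map' := lp.norm_single two_pos i }

@[simp]
lemma lp.singleₗᵢ_apply (i : ι) (a : G i) : lp.singleₗᵢ 𝕜 G i a = lp.single 2 i a :=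
  rfl

lemma lp.orthogonalFamily_singleₗᵢ : OrthogonalFamily 𝕜 G (lp.singleₗᵢ 𝕜 G) := by
  intro i j hij a b
  rw [lp.singleₗᵢ_apply, lp.singleₗᵢ_apply, lp.inner_single_left, lp.single_apply_ne 2 j b hij,
    inner_zero_right]

end lp

lemma sum_sq_mul_norm_sq_le_of_orthogonalFamily {𝕜 ι K H : Type*} [RCLike 𝕜]
    [NormedAddCommGroup K] [InnerProductSpace 𝕜 K] [NormedAddCommGroup H] [InnerProductSpace 𝕜 H]
    {G : ι → Type*} [∀ i, NormedAddCommGroup (G i)] [∀ i, InnerProductSpace 𝕜 (G i)]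
    {V : ∀ i, G i →ₗᵢ[𝕜] K} (hV : OrthogonalFamily 𝕜 G V) (L : K →L[𝕜] H) (f : H) (y : ι → H)
    (z : ∀ i, G i) (c : ι → ℝ) (hc : ∀ i, 0 ≤ c i) (hLz : ∀ i, L (V i (z i)) = y i)
    (hyf : ∀ i, re ⟪y i, f⟫_𝕜 = ‖y i‖ ^ 2) (hz : ∀ i, c i * ‖z i‖ ≤ ‖y i‖) (s : Finset ι) :
    ∑ i ∈ s, c i ^ 2 * ‖y i‖ ^ 2 ≤ ‖L‖ ^ 2 * ‖f‖ ^ 2 := by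
  set S := ∑ i ∈ s, c i ^ 2 * ‖y i‖ ^ 2
  set x := ∑ i ∈ s, V i (((c i ^ 2 : ℝ) : 𝕜) • z i)
  have hx : ‖x‖ ^ 2 ≤ S := by
    rw [hV.norm_sum]
    refine Finset.sum_le_sum fun i _ => ?_
    have := pow_le_pow_left₀ (mul_nonneg (hc i) (norm_nonneg _)) (hz i) 2
    rw [norm_smul, norm_algebraMap', Real.norm_of_nonneg (sq_nonneg _)]
    nlinarith [sq_nonneg (c i)]
  have hSx : S ≤ ‖L‖ * ‖f‖ * ‖x‖ := calc
    S = re ⟪L x, f⟫_𝕜 := by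
      simp only [x, map_sum, map_smul, hLz, sum_inner, inner_smul_left, conj_ofReal,
        re_ofReal_mul, hyf, S]
    _ ≤ ‖L x‖ * ‖f‖ := re_inner_le_norm _ _
    _ ≤ ‖L‖ * ‖f‖ * ‖x‖ := by nlinarith [L.le_opNorm x, norm_nonneg f]
  -- `S ≤ 2 a ‖x‖ - ‖x‖² ≤ a²` for `a = ‖L‖ ‖f‖`
  nlinarith [sq_nonneg (‖L‖ * ‖f‖ - ‖x‖)]

theorem fusionBessel_of_leftInverse_image_general
    {H : Type*} [NormedAddCommGroup H] [InnerProductSpace ℂ H] [CompleteSpace H]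
    {I : Type*} [DecidableEq I]
    (W : I → Submodule ℂ H) [∀ i, CompleteSpace (W i)]
    (L : lp (fun i => W i) 2 →L[ℂ] H)
    (M : I → (lp (fun i => W i) 2 →L[ℂ] lp (fun i => W i) 2))
    (hM : ∀ (k : I) (g : lp (fun i => W i) 2) (j : I), M k g j = if j = k then g j else 0)
    (v : I → ℝ)
    (δ : ℝ) (hδ : 0 < δ) (hδle : ∀ i, δ ≤ (v i)⁻¹ * redMinMod (L ∘L M i)) :
    ∃ hcl : ∀ i, IsClosed ((LinearMap.range (L ∘L M i : lp (fun i => W i) 2 →ₗ[ℂ] H) : Submodule ℂ H) : Set H),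
      ∀ f : H,
        haveI : ∀ i, CompleteSpace (LinearMap.range (L ∘L M i : lp (fun i => W i) 2 →ₗ[ℂ] H) : Submodule ℂ H) :=
          fun i => (hcl i).completeSpace_coe
        (Summable fun i =>
            (v i) ^ 2 * ‖(Submodule.orthogonalProjectionOnto (LinearMap.range (L ∘L M i : lp (fun i => W i) 2 →ₗ[ℂ] H)) f : H)‖ ^ 2) ∧
        ∑' i, (v i) ^ 2 * ‖(Submodule.orthogonalProjectionOnto (LinearMap.range (L ∘L M i : lp (fun i => W i) 2 →ₗ[ℂ] H)) f : H)‖ ^ 2 ≤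
          (‖L‖ ^ 2 / δ ^ 2) * ‖f‖ ^ 2 := by
  obtain ⟨hv, hγ⟩ := forall_and.mp fun i =>
    pos_and_mul_le_of_le_inv_mul hδ (redMinMod_nonneg (L ∘L M i)) (hδle i)
  have hcl : ∀ i, IsClosed ((LinearMap.range (L ∘L M i : lp (fun i => W i) 2 →ₗ[ℂ] H)) : Set H) :=
    fun i => isClosed_range_of_redMinMod_pos _ ((mul_pos hδ (hv i)).trans_le (hγ i))
  refine ⟨hcl, fun f => ?_⟩
  have : ∀ i, CompleteSpace (LinearMap.range (L ∘L M i : lp (fun i => W i) 2 →ₗ[ℂ] H)) :=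
    fun i => (hcl i).completeSpace_coe
  set y : I → H := fun i =>
    (LinearMap.range (L ∘L M i : lp (fun i => W i) 2 →ₗ[ℂ] H)).orthogonalProjectionOnto f
  have hy_mem : ∀ i, y i ∈ LinearMap.range (L ∘L M i : lp (fun i => W i) 2 →ₗ[ℂ] H) :=
    fun i => Submodule.coe_mem _
  choose g hgy hg using fun i => exists_apply_eq_and_redMinMod_mul_norm_le _ (hy_mem i)
  have hLg : ∀ i, L (lp.singleₗᵢ ℂ _ i (g i i)) = y i := fun i => by
    simpa [← lp.eq_single_of_apply_eq_ite (hM i (g i))] using hgy i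
  have hz : ∀ i, δ * v i * ‖g i i‖ ≤ ‖y i‖ := fun i =>
    (mul_le_mul (hγ i) (lp.norm_apply_le_norm two_ne_zero _ _) (norm_nonneg _)
      (redMinMod_nonneg _)).trans (hg i)
  have hfin (s : Finset I) : ∑ i ∈ s, v i ^ 2 * ‖y i‖ ^ 2 ≤ ‖L‖ ^ 2 / δ ^ 2 * ‖f‖ ^ 2 := by
    rw [div_mul_eq_mul_div, le_div_iff₀ (by positivity), Finset.sum_mul]
    calc ∑ i ∈ s, v i ^ 2 * ‖y i‖ ^ 2 * δ ^ 2 = ∑ i ∈ s, (δ * v i) ^ 2 * ‖y i‖ ^ 2 :=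
          Finset.sum_congr rfl fun i _ => by ring
      _ ≤ ‖L‖ ^ 2 * ‖f‖ ^ 2 :=
        sum_sq_mul_norm_sq_le_of_orthogonalFamily lp.orthogonalFamily_singleₗᵢ L f y
          (fun i => g i i) _ (fun i => (mul_pos hδ (hv i)).le) hLg
          (fun i => Submodule.re_inner_starProjection_eq_normSq _ f) hz s
  have hsum := summable_of_sum_le (fun i => by positivity) hfin
  exact ⟨hsum, hsum.tsum_le_of_sum_le hfin⟩

/-- If `L : K_W → H` has range contained in `𝒱` and `δ ≤ v i⁻¹ γ(L ∘ M_i)` for all `i`,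
then the subspaces `V_i = L(M_i(K_W))` are closed and `(V,v)` is a fusion Bessel sequence
for `𝒱` with upper Bessel bound `‖L‖² / δ²`. -/
theorem fusionBessel_of_leftInverse_image
    {H : Type*} [NormedAddCommGroup H] [InnerProductSpace ℂ H] [CompleteSpace H]
    {I : Type*} [Countable I] [DecidableEq I]
    (W : I → Submodule ℂ H) [∀ i, CompleteSpace (W i)]
    (w : I → ℝ) (hw : ∀ i, 0 < w i)
    (TW : lp (fun i => W i) 2 →L[ℂ] H)
    (hTW : ∀ g : lp (fun i => W i) 2, HasSum (fun i => (w i : ℂ) • (g i : H)) (TW g))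
    (𝒱 : Submodule ℂ H) [CompleteSpace 𝒱]
    (L : lp (fun i => W i) 2 →L[ℂ] H) (hLran : LinearMap.range (L : lp (fun i => W i) 2 →ₗ[ℂ] H) ≤ 𝒱)
    (M : I → (lp (fun i => W i) 2 →L[ℂ] lp (fun i => W i) 2))
    (hM : ∀ (k : I) (g : lp (fun i => W i) 2) (j : I), M k g j = if j = k then g j else 0)
    (v : I → ℝ) (hv : ∀ i, 0 < v i)
    (δ : ℝ) (hδ : 0 < δ) (hδle : ∀ i, δ ≤ (v i)⁻¹ * redMinMod (L ∘L M i)) :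
    ∃ hcl : ∀ i, IsClosed ((LinearMap.range (L ∘L M i : lp (fun i => W i) 2 →ₗ[ℂ] H) : Submodule ℂ H) : Set H),
      ∀ f : H,
        haveI : ∀ i, CompleteSpace (LinearMap.range (L ∘L M i : lp (fun i => W i) 2 →ₗ[ℂ] H) : Submodule ℂ H) :=
          fun i => (hcl i).completeSpace_coe
        (Summable fun i =>
            (v i) ^ 2 * ‖(Submodule.orthogonalProjectionOnto (LinearMap.range (L ∘L M i : lp (fun i => W i) 2 →ₗ[ℂ] H)) f : H)‖ ^ 2) ∧
        ∑' i, (v i) ^ 2 * ‖(Submodule.orthogonalProjectionOnto (LinearMap.range (L ∘L M i : lp (fun i => W i) 2 →ₗ[ℂ] H)) f : H)‖ ^ 2 ≤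
          (‖L‖ ^ 2 / δ ^ 2) * ‖f‖ ^ 2 :=
  fusionBessel_of_leftInverse_image_general W L M hM v δ hδ hδle
end
end

section
/- Let H be a complex Hilbert space, 𝒱 a closed subspace, and (V,v) = ((V_i, v_i))_{i∈I} a fusion Bessel sequence with every V_i ⊆ 𝒱 and synthesis operator T_V. Let A : 𝒱 → 𝒱 be a bounded bijective operator (with bounded inverse A⁻¹), let ṽ = (ṽ_i)_{i∈I} be weights, and let δ > 0 satisfy δ ≤ v_i/ṽ_i for all i ∈ I. Then each A(V_i) is a closed subspace of 𝒱 and (A(V_i), ṽ_i)_{i∈I} is a fusion Bessel sequence for 𝒱 with upper Bessel bound ‖A ∘ T_V‖² ‖A⁻¹‖² / δ²; that is, Σ_{i∈I} ṽ_i² ‖π_{A(V_i)} f‖² ≤ (‖A ∘ T_V‖² ‖A⁻¹‖² / δ²) ‖f‖² for all f ∈ H. -/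
/-!
Fix a finite set `F` of indices, write `gᵢ = π_{A(Vᵢ)} f = A yᵢ` with `yᵢ ∈ Vᵢ`, and test
`T = A ∘ T_V` on `k = ∑_{i ∈ F} (ṽᵢ² / vᵢ) yᵢ ∈ K_V`. Then `T k = ∑ ṽᵢ² gᵢ`, so
`S = ∑ ṽᵢ² ‖gᵢ‖² = Re ⟪T k, f⟫ ≤ ‖T‖ ‖k‖ ‖f‖`, while `‖yᵢ‖ ≤ ‖A⁻¹‖ ‖gᵢ‖` and
`ṽᵢ² / vᵢ ≤ ṽᵢ / δ` give `‖k‖² ≤ ‖A⁻¹‖² S / δ²`. Together, `S ≤ ‖T‖² ‖A⁻¹‖² ‖f‖² / δ²`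
uniformly in `F`. Each `A(Vᵢ)` is closed because `A` followed by the inclusion `𝒱 → H` is a
closed embedding.
-/

open scoped ENNReal

theorem le_sq_mul_of_le_mul_of_sq_le_mul {S a b D : ℝ} (hS : 0 ≤ S) (hD : 0 ≤ D)
    (h₁ : S ≤ a * b) (h₂ : b ^ 2 ≤ D * S) : S ≤ a ^ 2 * D := by
  rcases hS.eq_or_lt with rfl | hS
  · positivity
  · nlinarith [mul_self_le_mul_self hS.le h₁, mul_le_mul_of_nonneg_left h₂ (sq_nonneg a)]

theorem sq_div_le_div_of_le_div {v w δ : ℝ} (hv : 0 < v) (hw : 0 < w) (hδ : 0 < δ)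
    (h : δ ≤ v / w) : w ^ 2 / v ≤ w / δ := by
  rw [le_div_iff₀ hw] at h
  rw [div_le_div_iff₀ hv hδ]
  nlinarith

theorem ContinuousLinearEquiv.norm_le_norm_symm_mul_norm_apply {𝕜 E F : Type*}
    [NontriviallyNormedField 𝕜] [NormedAddCommGroup E] [NormedSpace 𝕜 E]
    [NormedAddCommGroup F] [NormedSpace 𝕜 F] (e : E ≃L[𝕜] F) (x : E) :
    ‖x‖ ≤ ‖(e.symm : F →L[𝕜] E)‖ * ‖e x‖ := by
  simpa using (e.symm : F →L[𝕜] E).le_opNorm (e x)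

theorem lp.norm_sq_sum_single {I : Type*} [DecidableEq I] {E : I → Type*}
    [∀ i, NormedAddCommGroup (E i)] (x : ∀ i, E i) (F : Finset I) :
    ‖∑ i ∈ F, lp.single 2 i (x i)‖ ^ 2 = ∑ i ∈ F, ‖x i‖ ^ 2 := by
  simpa only [ENNReal.toReal_ofNat, Real.rpow_two] using
    lp.norm_sum_single (p := 2) (by norm_num) x F

theorem lp.map_single_of_hasSum {𝕜 I H : Type*} [NormedField 𝕜] [DecidableEq I]
    [NormedAddCommGroup H] [NormedSpace 𝕜 H] {p : ℝ≥0∞} [Fact (1 ≤ p)] {V : I → Submodule 𝕜 H}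
    {c : I → 𝕜} (T : lp (fun i => V i) p →L[𝕜] H)
    (hT : ∀ g : lp (fun i => V i) p, HasSum (fun i => c i • (g i : H)) (T g))
    (i : I) (y : V i) : T (lp.single p i y) = c i • (y : H) := by
  refine (hT _).unique ?_
  convert hasSum_ite_eq i (c i • (y : H)) using 2 with j
  rw [lp.single_apply]
  split_ifs with h
  · subst h; simp
  · simp [h]

namespace Submodule

variable {𝕜 H : Type*} [NontriviallyNormedField 𝕜] [NormedAddCommGroup H] [NormedSpace 𝕜 H]

/-- The paper's `A(U)` for `U ≤ 𝒱`, seen as a subspace of `H`. -/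
def mapOnSubspace (𝒱 : Submodule 𝕜 H) (A : 𝒱 ≃L[𝕜] 𝒱) (U : Submodule 𝕜 H) : Submodule 𝕜 H :=
  (U.comap (𝒱.subtypeL : 𝒱 →ₗ[𝕜] H)).map
    ((𝒱.subtypeL ∘L (A : 𝒱 →L[𝕜] 𝒱) : 𝒱 →L[𝕜] H) : 𝒱 →ₗ[𝕜] H)

theorem mem_mapOnSubspace {𝒱 : Submodule 𝕜 H} {A : 𝒱 ≃L[𝕜] 𝒱} {U : Submodule 𝕜 H} {w : H} :
    w ∈ mapOnSubspace 𝒱 A U ↔ ∃ y : 𝒱, (y : H) ∈ U ∧ (A y : H) = w :=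
  Iff.rfl

theorem mapOnSubspace_le (𝒱 : Submodule 𝕜 H) (A : 𝒱 ≃L[𝕜] 𝒱) (U : Submodule 𝕜 H) :
    mapOnSubspace 𝒱 A U ≤ 𝒱 := by
  rintro _ ⟨y, -, rfl⟩
  exact (A y).2

theorem isClosed_mapOnSubspace (𝒱 : Submodule 𝕜 H) [CompleteSpace 𝒱] (A : 𝒱 ≃L[𝕜] 𝒱)
    {U : Submodule 𝕜 H} (hU : IsClosed (U : Set H)) :
    IsClosed (mapOnSubspace 𝒱 A U : Set H) := by
  have h𝒱 : IsClosed (𝒱 : Set H) := (completeSpace_coe_iff_isComplete.1 ‹_›).isClosed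
  rw [mapOnSubspace, map_coe]
  exact (h𝒱.isClosedEmbedding_subtypeVal.comp A.toHomeomorph.isClosedEmbedding).isClosedMap _
    (hU.preimage continuous_subtype_val)

end Submodule

theorem Submodule.sum_mul_norm_sq_orthogonalProjectionOnto_eq_re_inner {𝕜 E I : Type*}
    [RCLike 𝕜] [NormedAddCommGroup E] [InnerProductSpace 𝕜 E] (W : I → Submodule 𝕜 E)
    [∀ i, (W i).HasOrthogonalProjection] (c : I → ℝ) (f : E) (F : Finset I) :
    ∑ i ∈ F, c i * ‖((W i).orthogonalProjectionOnto f : E)‖ ^ 2 =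
      RCLike.re (inner 𝕜 (∑ i ∈ F, (c i : 𝕜) • (W i).starProjection f) f) := by
  rw [sum_inner, map_sum]
  refine Finset.sum_congr rfl fun i _ => ?_
  rw [inner_smul_real_left, RCLike.smul_re, norm_coe, re_inner_starProjection_eq_normSq]

open Submodule in
theorem exists_comp_synthesis_eq_sum_of_mem_mapOnSubspace
    {H I : Type*} [NormedAddCommGroup H] [InnerProductSpace ℂ H] [DecidableEq I]
    {𝒱 : Submodule ℂ H} {V : I → Submodule ℂ H} {v vt : I → ℝ}
    (hv : ∀ i, 0 < v i) (hvt : ∀ i, 0 < vt i) {TV : lp (fun i => V i) 2 →L[ℂ] H}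
    (hTV : ∀ g : lp (fun i => V i) 2, HasSum (fun i => (v i : ℂ) • (g i : H)) (TV g))
    {TV' : lp (fun i => V i) 2 →L[ℂ] 𝒱} (hTV' : ∀ g, (TV' g : H) = TV g)
    (A : 𝒱 ≃L[ℂ] 𝒱) {δ : ℝ} (hδ : 0 < δ) (hδle : ∀ i, δ ≤ v i / vt i)
    {g : I → H} (hg : ∀ i, g i ∈ mapOnSubspace 𝒱 A (V i)) (F : Finset I) :
    ∃ k : lp (fun i => V i) 2,
      (((A : 𝒱 →L[ℂ] 𝒱) ∘L TV') k : H) = ∑ i ∈ F, ((vt i ^ 2 : ℝ) : ℂ) • g i ∧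
      ‖k‖ ^ 2 ≤ ‖(A.symm : 𝒱 →L[ℂ] 𝒱)‖ ^ 2 / δ ^ 2 * ∑ i ∈ F, vt i ^ 2 * ‖g i‖ ^ 2 := by
  choose y hyV hAy using fun i => mem_mapOnSubspace.1 (hg i)
  let x : ∀ i, V i := fun i => ⟨((vt i ^ 2 / v i : ℝ) : ℂ) • (y i : H), (V i).smul_mem _ (hyV i)⟩
  refine ⟨∑ i ∈ F, lp.single 2 i (x i), ?_, ?_⟩
  · have hTV'x : TV' (∑ i ∈ F, lp.single 2 i (x i)) = ∑ i ∈ F, ((vt i ^ 2 : ℝ) : ℂ) • y i := by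
      refine Subtype.ext ?_
      simp only [hTV', map_sum, lp.map_single_of_hasSum TV hTV, coe_sum, coe_smul, x, smul_smul,
        ← Complex.ofReal_mul, mul_div_cancel₀ _ (hv _).ne']
    rw [ContinuousLinearMap.comp_apply, hTV'x]
    simp only [map_sum, map_smul, coe_sum, coe_smul]
    exact Finset.sum_congr rfl fun i _ => congrArg _ (hAy i)
  rw [lp.norm_sq_sum_single, Finset.mul_sum]
  refine Finset.sum_le_sum fun i _ => ?_
  have hcoef : 0 ≤ vt i ^ 2 / v i := by have := hv i; positivity
  have hx : ‖x i‖ = vt i ^ 2 / v i * ‖y i‖ := by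
    change ‖((vt i ^ 2 / v i : ℝ) : ℂ) • (y i : H)‖ = _
    rw [norm_smul, Complex.norm_real, Real.norm_of_nonneg hcoef, norm_coe]
  have hy : ‖y i‖ ≤ ‖(A.symm : 𝒱 →L[ℂ] 𝒱)‖ * ‖g i‖ := by
    refine (A.norm_le_norm_symm_mul_norm_apply (y i)).trans_eq ?_
    rw [← norm_coe, hAy i]
  calc ‖x i‖ ^ 2 ≤ (vt i / δ * (‖(A.symm : 𝒱 →L[ℂ] 𝒱)‖ * ‖g i‖)) ^ 2 := by
        have := hvt i
        rw [hx]
        gcongr (?_ * ?_) ^ 2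
        exact sq_div_le_div_of_le_div (hv i) (hvt i) hδ (hδle i)
    _ = ‖(A.symm : 𝒱 →L[ℂ] 𝒱)‖ ^ 2 / δ ^ 2 * (vt i ^ 2 * ‖g i‖ ^ 2) := by ring

open Submodule in
theorem sum_sq_norm_orthogonalProjectionOnto_mapOnSubspace_le
    {H I : Type*} [NormedAddCommGroup H] [InnerProductSpace ℂ H] [DecidableEq I]
    {𝒱 : Submodule ℂ H} {V : I → Submodule ℂ H} {v vt : I → ℝ}
    (hv : ∀ i, 0 < v i) (hvt : ∀ i, 0 < vt i) {TV : lp (fun i => V i) 2 →L[ℂ] H}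
    (hTV : ∀ g : lp (fun i => V i) 2, HasSum (fun i => (v i : ℂ) • (g i : H)) (TV g))
    {TV' : lp (fun i => V i) 2 →L[ℂ] 𝒱} (hTV' : ∀ g, (TV' g : H) = TV g)
    (A : 𝒱 ≃L[ℂ] 𝒱) {δ : ℝ} (hδ : 0 < δ) (hδle : ∀ i, δ ≤ v i / vt i)
    [∀ i, (mapOnSubspace 𝒱 A (V i)).HasOrthogonalProjection] (f : H) (F : Finset I) :
    ∑ i ∈ F, vt i ^ 2 * ‖((mapOnSubspace 𝒱 A (V i)).orthogonalProjectionOnto f : H)‖ ^ 2 ≤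
      (‖(A : 𝒱 →L[ℂ] 𝒱) ∘L TV'‖ ^ 2 * ‖(A.symm : 𝒱 →L[ℂ] 𝒱)‖ ^ 2 / δ ^ 2) * ‖f‖ ^ 2 := by
  set W := fun i => mapOnSubspace 𝒱 A (V i)
  set S := ∑ i ∈ F, vt i ^ 2 * ‖((W i).orthogonalProjectionOnto f : H)‖ ^ 2
  set T := (A : 𝒱 →L[ℂ] 𝒱) ∘L TV'
  obtain ⟨k, hTk, hk⟩ := exists_comp_synthesis_eq_sum_of_mem_mapOnSubspace hv hvt hTV hTV' A hδ
    hδle (fun i => ((W i).orthogonalProjectionOnto f).2) F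
  have hS : S = RCLike.re (inner ℂ (T k : H) f) := by
    rw [hTk]
    exact sum_mul_norm_sq_orthogonalProjectionOnto_eq_re_inner W _ f F
  have hSk : S ≤ (‖f‖ * ‖T‖) * ‖k‖ := calc
    S ≤ ‖(T k : H)‖ * ‖f‖ := hS ▸ re_inner_le_norm _ _
    _ ≤ (‖T‖ * ‖k‖) * ‖f‖ := by rw [norm_coe]; gcongr; exact T.le_opNorm k
    _ = (‖f‖ * ‖T‖) * ‖k‖ := by ring
  exact (le_sq_mul_of_le_mul_of_sq_le_mul (by positivity) (by positivity) hSk hk).trans_eq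
    (by ring)

theorem fusionBessel_map_invertible_general
    {H : Type*} [NormedAddCommGroup H] [InnerProductSpace ℂ H] [CompleteSpace H]
    {I : Type*}
    (𝒱 : Submodule ℂ H) [CompleteSpace 𝒱]
    (V : I → Submodule ℂ H) [∀ i, CompleteSpace (V i)]
    (v : I → ℝ) (hv : ∀ i, 0 < v i)
    (TV : lp (fun i => V i) 2 →L[ℂ] H)
    (hTV : ∀ g : lp (fun i => V i) 2, HasSum (fun i => (v i : ℂ) • (g i : H)) (TV g))
    -- the corestriction of `TV` to `𝒱` (well defined since every `V i ≤ 𝒱`)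
    (TV' : lp (fun i => V i) 2 →L[ℂ] 𝒱) (hTV' : ∀ g, (TV' g : H) = TV g)
    -- `A` is a bounded bijective operator on `𝒱` with bounded inverse
    (A : 𝒱 ≃L[ℂ] 𝒱)
    (vt : I → ℝ) (hvt : ∀ i, 0 < vt i)
    (δ : ℝ) (hδ : 0 < δ) (hδle : ∀ i, δ ≤ v i / vt i) :
    ∃ hcl : ∀ i, IsClosed
        ((Submodule.map ((𝒱.subtypeL ∘L (A : 𝒱 →L[ℂ] 𝒱) : 𝒱 →L[ℂ] H) : 𝒱 →ₗ[ℂ] H) (Submodule.comap (𝒱.subtypeL : 𝒱 →ₗ[ℂ] H) (V i))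
          : Submodule ℂ H) : Set H),
      (∀ i, Submodule.map ((𝒱.subtypeL ∘L (A : 𝒱 →L[ℂ] 𝒱) : 𝒱 →L[ℂ] H) : 𝒱 →ₗ[ℂ] H) (Submodule.comap (𝒱.subtypeL : 𝒱 →ₗ[ℂ] H) (V i))
          ≤ 𝒱) ∧
      ∀ f : H,
        haveI : ∀ i, CompleteSpace
            (Submodule.map ((𝒱.subtypeL ∘L (A : 𝒱 →L[ℂ] 𝒱) : 𝒱 →L[ℂ] H) : 𝒱 →ₗ[ℂ] H) (Submodule.comap (𝒱.subtypeL : 𝒱 →ₗ[ℂ] H) (V i))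
              : Submodule ℂ H) := fun i => (hcl i).completeSpace_coe
        (Summable fun i => (vt i) ^ 2 *
            ‖(Submodule.orthogonalProjectionOnto
              (Submodule.map ((𝒱.subtypeL ∘L (A : 𝒱 →L[ℂ] 𝒱) : 𝒱 →L[ℂ] H) : 𝒱 →ₗ[ℂ] H) (Submodule.comap (𝒱.subtypeL : 𝒱 →ₗ[ℂ] H) (V i)))
              f : H)‖ ^ 2) ∧
        ∑' i, (vt i) ^ 2 *
            ‖(Submodule.orthogonalProjectionOnto
              (Submodule.map ((𝒱.subtypeL ∘L (A : 𝒱 →L[ℂ] 𝒱) : 𝒱 →L[ℂ] H) : 𝒱 →ₗ[ℂ] H) (Submodule.comap (𝒱.subtypeL : 𝒱 →ₗ[ℂ] H) (V i)))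
              f : H)‖ ^ 2 ≤
          (‖(A : 𝒱 →L[ℂ] 𝒱) ∘L TV'‖ ^ 2 * ‖(A.symm : 𝒱 →L[ℂ] 𝒱)‖ ^ 2 / δ ^ 2) * ‖f‖ ^ 2 := by
  classical
  have hcl : ∀ i, IsClosed (Submodule.mapOnSubspace 𝒱 A (V i) : Set H) := fun i =>
    Submodule.isClosed_mapOnSubspace 𝒱 A
      (completeSpace_coe_iff_isComplete.1 inferInstance).isClosed
  refine ⟨hcl, fun i => Submodule.mapOnSubspace_le 𝒱 A (V i), fun f => ?_⟩
  have hsum := sum_sq_norm_orthogonalProjectionOnto_mapOnSubspace_le hv hvt hTV hTV' A hδ hδle f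
  exact ⟨summable_of_sum_le (fun i => by positivity) hsum,
    Real.tsum_le_of_sum_le (fun i => by positivity) hsum⟩

/-- If `(V,v)` is a fusion Bessel sequence inside `𝒱`, `A : 𝒱 → 𝒱` is a bounded bijective
operator with bounded inverse, and `δ ≤ v i / ṽ i` for all `i`, then `(A(V_i), ṽ_i)` is a
fusion Bessel sequence for `𝒱` with upper Bessel bound `‖A ∘ T_V‖² ‖A⁻¹‖² / δ²`. -/
theorem fusionBessel_map_invertible
    {H : Type*} [NormedAddCommGroup H] [InnerProductSpace ℂ H] [CompleteSpace H]
    {I : Type*} [Countable I]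
    (𝒱 : Submodule ℂ H) [CompleteSpace 𝒱]
    (V : I → Submodule ℂ H) [∀ i, CompleteSpace (V i)] (hV : ∀ i, V i ≤ 𝒱)
    (v : I → ℝ) (hv : ∀ i, 0 < v i)
    (TV : lp (fun i => V i) 2 →L[ℂ] H)
    (hTV : ∀ g : lp (fun i => V i) 2, HasSum (fun i => (v i : ℂ) • (g i : H)) (TV g))
    -- the corestriction of `TV` to `𝒱` (well defined since every `V i ≤ 𝒱`)
    (TV' : lp (fun i => V i) 2 →L[ℂ] 𝒱) (hTV' : ∀ g, (TV' g : H) = TV g)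
    -- `A` is a bounded bijective operator on `𝒱` with bounded inverse
    (A : 𝒱 ≃L[ℂ] 𝒱)
    (vt : I → ℝ) (hvt : ∀ i, 0 < vt i)
    (δ : ℝ) (hδ : 0 < δ) (hδle : ∀ i, δ ≤ v i / vt i) :
    ∃ hcl : ∀ i, IsClosed
        ((Submodule.map ((𝒱.subtypeL ∘L (A : 𝒱 →L[ℂ] 𝒱) : 𝒱 →L[ℂ] H) : 𝒱 →ₗ[ℂ] H) (Submodule.comap (𝒱.subtypeL : 𝒱 →ₗ[ℂ] H) (V i))
          : Submodule ℂ H) : Set H),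
      (∀ i, Submodule.map ((𝒱.subtypeL ∘L (A : 𝒱 →L[ℂ] 𝒱) : 𝒱 →L[ℂ] H) : 𝒱 →ₗ[ℂ] H) (Submodule.comap (𝒱.subtypeL : 𝒱 →ₗ[ℂ] H) (V i))
          ≤ 𝒱) ∧
      ∀ f : H,
        haveI : ∀ i, CompleteSpace
            (Submodule.map ((𝒱.subtypeL ∘L (A : 𝒱 →L[ℂ] 𝒱) : 𝒱 →L[ℂ] H) : 𝒱 →ₗ[ℂ] H) (Submodule.comap (𝒱.subtypeL : 𝒱 →ₗ[ℂ] H) (V i))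
              : Submodule ℂ H) := fun i => (hcl i).completeSpace_coe
        (Summable fun i => (vt i) ^ 2 *
            ‖(Submodule.orthogonalProjectionOnto
              (Submodule.map ((𝒱.subtypeL ∘L (A : 𝒱 →L[ℂ] 𝒱) : 𝒱 →L[ℂ] H) : 𝒱 →ₗ[ℂ] H) (Submodule.comap (𝒱.subtypeL : 𝒱 →ₗ[ℂ] H) (V i)))
              f : H)‖ ^ 2) ∧
        ∑' i, (vt i) ^ 2 *
            ‖(Submodule.orthogonalProjectionOnto
              (Submodule.map ((𝒱.subtypeL ∘L (A : 𝒱 →L[ℂ] 𝒱) : 𝒱 →L[ℂ] H) : 𝒱 →ₗ[ℂ] H) (Submodule.comap (𝒱.subtypeL : 𝒱 →ₗ[ℂ] H) (V i)))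
              f : H)‖ ^ 2 ≤
          (‖(A : 𝒱 →L[ℂ] 𝒱) ∘L TV'‖ ^ 2 * ‖(A.symm : 𝒱 →L[ℂ] 𝒱)‖ ^ 2 / δ ^ 2) * ‖f‖ ^ 2 :=
  fusionBessel_map_invertible_general 𝒱 V v hv TV hTV TV' hTV' A vt hvt δ hδ hδle
end

section
/- Let H be a complex Hilbert space, and let 𝒱 and 𝒲 be finite-dimensional subspaces of H with H = 𝒱 ⊕ 𝒲ᗮ; set P = π_{𝒱,𝒲ᗮ} and let ε ≥ 0. Let I be a finite index set, (W,w) a fusion frame for 𝒲 with synthesis operator T_W, (V,v) a fusion frame for 𝒱 with synthesis operator T_V, and Q : K_W → K_V a bounded operator. Then Q is component preserving and ‖T_V Q T_W* − P‖ ≤ ε if and only if there exists a bounded operator L : K_W → H with ‖L T_W* − P‖ ≤ ε, range of L equal to 𝒱, V_i = L(M_i(K_W)) for every i ∈ I, and Q = Q_{L,v}, where (Q_{L,v} f)_i = v_i⁻¹ L(M_i f). Moreover, every bounded L : K_W → H with ‖L T_W* − P‖ ≤ ε and range equal to 𝒱 is of the form L = T_V ∘ Q for some such component preserving Q and fusion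 frame (V,v) for 𝒱. -/
/-!
If `Q` is component preserving, it maps the `i`-th summand `M_i(K_W)` onto the `i`-th summand
`M_i(K_V)`; in particular `Q` is onto, so `L := T_V Q` has the range `𝒱` of `T_V`, and
`L(M_i(K_W)) = T_V(M_i(K_V)) = V_i`, while `L(M_i f) = v_i (Q f)_i` because `Q(M_i f)` lives in
the `i`-th summand and `(Q f)_i = (Q(M_i f))_i`. Conversely, if `Q = Q_{L,v}` then
`T_V Q f = ∑ L(M_i f) = L f`, and `V_i = L(M_i(K_W))` makes `Q_{L,v}` map `M_i(K_W)` onto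
`M_i(K_V)`. In both directions `T_V Q = L`, which carries the `ε`-estimate across. For the last
assertion take `V_i := L(M_i(K_W))`, `v_i := 1` and `Q := Q_{L,1}`.
-/
namespace lp
variable {𝕜 : Type*} [NontriviallyNormedField 𝕜] {I : Type*} [Fintype I]
  {E : I → Type*} [∀ i, NormedAddCommGroup (E i)] [∀ i, NormedSpace 𝕜 (E i)]

variable (𝕜 E) in
noncomputable def continuousLinearEquivPi : lp E 2 ≃L[𝕜] ∀ i, E i :=
  (lpPiLpₗᵢ E 𝕜).toContinuousLinearEquiv.trans (PiLp.continuousLinearEquiv 2 𝕜 E)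

@[simp] lemma continuousLinearEquivPi_apply (f : lp E 2) : continuousLinearEquivPi 𝕜 E f = ⇑f :=
  rfl

lemma exists_clm_apply_eq {X : Type*} [NormedAddCommGroup X] [NormedSpace 𝕜 X]
    (A : ∀ i, X →L[𝕜] E i) : ∃ Q : X →L[𝕜] lp E 2, ∀ x i, Q x i = A i x :=
  ⟨(continuousLinearEquivPi 𝕜 E).symm.toContinuousLinearMap ∘L ContinuousLinearMap.pi A,
    fun _ _ => rfl⟩

end lp

section CoordinateProjection
variable {𝕜 : Type*} [NontriviallyNormedField 𝕜] {I : Type*} [DecidableEq I]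
  {E : I → Type*} [∀ i, NormedAddCommGroup (E i)] [∀ i, NormedSpace 𝕜 (E i)]

def IsCoordinateProjection (M : I → lp E 2 →L[𝕜] lp E 2) : Prop :=
  ∀ k g j, M k g j = if j = k then g j else 0

theorem exists_isCoordinateProjection [Fintype I] :
    ∃ M : I → lp E 2 →L[𝕜] lp E 2, IsCoordinateProjection M := by
  choose M hM using fun k => lp.exists_clm_apply_eq (𝕜 := 𝕜) fun j =>
    if j = k then
      ContinuousLinearMap.proj j ∘L (lp.continuousLinearEquivPi 𝕜 E).toContinuousLinearMap
    else 0
  refine ⟨M, fun k g j => ?_⟩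
  rw [hM]
  split_ifs <;> rfl

namespace IsCoordinateProjection
variable {M : I → lp E 2 →L[𝕜] lp E 2}

theorem apply_eq (hM : IsCoordinateProjection M) (k : I) (g : lp E 2) (j : I) :
    M k g j = if j = k then g j else 0 :=
  hM k g j

theorem sum_apply [Fintype I] (hM : IsCoordinateProjection M) (f : lp E 2) :
    ∑ i, M i f = f := by
  ext j
  rw [lp.coeFn_sum, Finset.sum_apply]
  simp [hM.apply_eq]

theorem mem_range_iff (hM : IsCoordinateProjection M) (i : I) (g : lp E 2) :
    g ∈ LinearMap.range (M i : lp E 2 →ₗ[𝕜] lp E 2) ↔ ∀ j ≠ i, g j = 0 := by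
  constructor
  · rintro ⟨f, rfl⟩ j hj
    simp [hM.apply_eq, hj]
  · intro hg
    refine ⟨g, lp.ext (funext fun j => ?_)⟩
    by_cases hj : j = i
    · simp [hM.apply_eq, hj]
    · simp [hM.apply_eq, hj, hg j hj]

theorem apply_apply_of_ne (hM : IsCoordinateProjection M) {i j : I} (h : j ≠ i) (f : lp E 2) :
    M j (M i f) = 0 := by
  ext k
  by_cases hk : k = j
  · subst hk; simp [hM.apply_eq, h]
  · simp [hM.apply_eq, hk]

theorem apply_apply_self (hM : IsCoordinateProjection M) (i : I) (f : lp E 2) :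
    M i (M i f) = M i f := by
  ext k
  by_cases hk : k = i <;> simp [hM.apply_eq, hk]

end IsCoordinateProjection
end CoordinateProjection

section Synthesis
variable {𝕜 : Type*} [NontriviallyNormedField 𝕜] {I : Type*} [Fintype I]
  {H : Type*} [NormedAddCommGroup H] [NormedSpace 𝕜 H] {V : I → Submodule 𝕜 H}

def IsSynthesisOperator (c : I → 𝕜) (T : lp (fun i => V i) 2 →L[𝕜] H) : Prop :=
  ∀ g, HasSum (fun i => c i • (g i : H)) (T g)

theorem exists_isSynthesisOperator (c : I → 𝕜) :
    ∃ T : lp (fun i => V i) 2 →L[𝕜] H, IsSynthesisOperator c T :=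
  ⟨∑ i, c i • (V i).subtypeL ∘L ContinuousLinearMap.proj i ∘L
      (lp.continuousLinearEquivPi 𝕜 fun i => V i).toContinuousLinearMap,
    fun g => by simpa using hasSum_fintype fun i => c i • (g i : H)⟩

namespace IsSynthesisOperator
variable {c : I → 𝕜} {T : lp (fun i => V i) 2 →L[𝕜] H}

theorem apply_eq_sum (hT : IsSynthesisOperator c T) (g : lp (fun i => V i) 2) :
    T g = ∑ i, c i • (g i : H) :=
  (hT g).unique (hasSum_fintype _)

theorem apply_eq_smul_of_ne_eq_zero (hT : IsSynthesisOperator c T) {i : I}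
    {g : lp (fun i => V i) 2} (hg : ∀ j ≠ i, g j = 0) : T g = c i • (g i : H) := by
  rw [hT.apply_eq_sum, Finset.sum_eq_single i (fun j _ hj => by simp [hg j hj]) (by simp)]

theorem range_comp_coordinateProjection [DecidableEq I] (hT : IsSynthesisOperator c T)
    {M : I → lp (fun i => V i) 2 →L[𝕜] lp (fun i => V i) 2} (hM : IsCoordinateProjection M)
    {i : I} (hc : c i ≠ 0) :
    LinearMap.range (T ∘L M i : lp (fun i => V i) 2 →ₗ[𝕜] H) = V i := by
  apply le_antisymm
  · rintro _ ⟨g, rfl⟩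
    have hsupp := (hM.mem_range_iff i (M i g)).1 ⟨g, rfl⟩
    simpa [hT.apply_eq_smul_of_ne_eq_zero hsupp] using (V i).smul_mem (c i) (M i g i).2
  · intro x hx
    let g : lp (fun i => V i) 2 := lp.single 2 i ⟨(c i)⁻¹ • x, (V i).smul_mem _ hx⟩
    have hsupp : ∀ j ≠ i, g j = 0 := fun j hj => lp.single_apply_ne 2 i _ hj
    refine ⟨g, ?_⟩
    have hMg : M i g = g := by
      obtain ⟨f, hf⟩ := (hM.mem_range_iff i g).2 hsupp
      rw [← hf]; exact hM.apply_apply_self i f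
    simp [hMg, hT.apply_eq_smul_of_ne_eq_zero hsupp, g, smul_inv_smul₀ hc]

end IsSynthesisOperator
end Synthesis

section ComponentPreserving
variable {𝕜 : Type*} [NontriviallyNormedField 𝕜] {I : Type*} [DecidableEq I]
  {E F : I → Type*} [∀ i, NormedAddCommGroup (E i)] [∀ i, NormedSpace 𝕜 (E i)]
  [∀ i, NormedAddCommGroup (F i)] [∀ i, NormedSpace 𝕜 (F i)]
  {MW : I → lp E 2 →L[𝕜] lp E 2} {MV : I → lp F 2 →L[𝕜] lp F 2}

def IsComponentPreserving (MW : I → lp E 2 →L[𝕜] lp E 2) (MV : I → lp F 2 →L[𝕜] lp F 2)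
    (Q : lp E 2 →L[𝕜] lp F 2) : Prop :=
  ∀ i, LinearMap.range (Q ∘L MW i : lp E 2 →ₗ[𝕜] lp F 2) =
    LinearMap.range (MV i : lp F 2 →ₗ[𝕜] lp F 2)

namespace IsComponentPreserving
variable {Q : lp E 2 →L[𝕜] lp F 2}

theorem apply_eq_zero_of_ne (hQ : IsComponentPreserving MW MV Q)
    (hMV : IsCoordinateProjection MV) {i j : I} (h : j ≠ i) (f : lp E 2) : Q (MW i f) j = 0 := by
  have hmem : Q (MW i f) ∈ LinearMap.range (MV i : lp F 2 →ₗ[𝕜] lp F 2) := hQ i ▸ ⟨f, rfl⟩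
  exact (hMV.mem_range_iff i _).1 hmem j h

theorem apply_eq_apply_comp [Fintype I] (hQ : IsComponentPreserving MW MV Q)
    (hMW : IsCoordinateProjection MW) (hMV : IsCoordinateProjection MV) (f : lp E 2) (i : I) :
    Q f i = Q (MW i f) i := by
  conv_lhs => rw [← hMW.sum_apply f, map_sum, lp.coeFn_sum, Finset.sum_apply]
  exact Finset.sum_eq_single i (fun j _ hj => hQ.apply_eq_zero_of_ne hMV (Ne.symm hj) f)
    (by simp)

theorem range_eq_top [Fintype I] (hQ : IsComponentPreserving MW MV Q)
    (hMV : IsCoordinateProjection MV) : LinearMap.range (Q : lp E 2 →ₗ[𝕜] lp F 2) = ⊤ := by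
  refine eq_top_iff.2 fun g _ => ?_
  rw [← hMV.sum_apply g]
  refine Submodule.sum_mem _ fun i _ => ?_
  obtain ⟨f, hf⟩ : MV i g ∈ LinearMap.range (Q ∘L MW i : lp E 2 →ₗ[𝕜] lp F 2) :=
    (hQ i).symm ▸ ⟨g, rfl⟩
  exact ⟨MW i f, hf⟩

theorem range_comp_eq_range [Fintype I] (hQ : IsComponentPreserving MW MV Q)
    (hMV : IsCoordinateProjection MV) {G : Type*} [NormedAddCommGroup G] [NormedSpace 𝕜 G]
    (T : lp F 2 →L[𝕜] G) :
    LinearMap.range (T ∘L Q : lp E 2 →ₗ[𝕜] G) = LinearMap.range (T : lp F 2 →ₗ[𝕜] G) := by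
  rw [ContinuousLinearMap.toLinearMap_comp, LinearMap.range_comp_of_range_eq_top _
      (hQ.range_eq_top hMV)]

end IsComponentPreserving
end ComponentPreserving

section SynthesisComp
variable {𝕜 : Type*} [NontriviallyNormedField 𝕜] {I : Type*} [DecidableEq I]
  {E : I → Type*} [∀ i, NormedAddCommGroup (E i)] [∀ i, NormedSpace 𝕜 (E i)]
  {H : Type*} [NormedAddCommGroup H] [NormedSpace 𝕜 H] {V : I → Submodule 𝕜 H}
  {MW : I → lp E 2 →L[𝕜] lp E 2} {MV : I → lp (fun i => V i) 2 →L[𝕜] lp (fun i => V i) 2}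
  {c : I → 𝕜} {TV : lp (fun i => V i) 2 →L[𝕜] H} {Q : lp E 2 →L[𝕜] lp (fun i => V i) 2}

namespace IsComponentPreserving

theorem coe_apply_eq_inv_smul [Fintype I] (hQ : IsComponentPreserving MW MV Q)
    (hMW : IsCoordinateProjection MW) (hMV : IsCoordinateProjection MV)
    (hTV : IsSynthesisOperator c TV) {i : I} (hc : c i ≠ 0) (f : lp E 2) :
    (Q f i : H) = (c i)⁻¹ • TV (Q (MW i f)) := by
  rw [hTV.apply_eq_smul_of_ne_eq_zero fun j hj => hQ.apply_eq_zero_of_ne hMV hj f,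
    ← hQ.apply_eq_apply_comp hMW hMV, inv_smul_smul₀ hc]

theorem range_synthesis_comp_comp [Fintype I] (hQ : IsComponentPreserving MW MV Q)
    (hMV : IsCoordinateProjection MV) (hTV : IsSynthesisOperator c TV) {i : I} (hc : c i ≠ 0) :
    LinearMap.range (TV ∘L Q ∘L MW i : lp E 2 →ₗ[𝕜] H) = V i := by
  rw [← hTV.range_comp_coordinateProjection hMV hc, ContinuousLinearMap.toLinearMap_comp TV,
    LinearMap.range_comp, hQ i, ← LinearMap.range_comp, ← ContinuousLinearMap.toLinearMap_comp]

end IsComponentPreserving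

variable {L : lp E 2 →L[𝕜] H}

theorem IsSynthesisOperator.comp_eq_of_coe_apply_eq [Fintype I]
    (hTV : IsSynthesisOperator c TV) (hMW : IsCoordinateProjection MW) (hc : ∀ i, c i ≠ 0)
    (hQL : ∀ f i, (Q f i : H) = (c i)⁻¹ • L (MW i f)) : TV ∘L Q = L := by
  ext f
  rw [ContinuousLinearMap.comp_apply, hTV.apply_eq_sum]
  calc ∑ i, c i • (Q f i : H) = ∑ i, L (MW i f) := by simp [hQL, smul_inv_smul₀ (hc _)]
    _ = L f := by rw [← map_sum, hMW.sum_apply]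

theorem isComponentPreserving_of_coe_apply_eq (hMW : IsCoordinateProjection MW)
    (hMV : IsCoordinateProjection MV) (hc : ∀ i, c i ≠ 0)
    (hV : ∀ i, V i = LinearMap.range (L ∘L MW i : lp E 2 →ₗ[𝕜] H))
    (hQL : ∀ f i, (Q f i : H) = (c i)⁻¹ • L (MW i f)) : IsComponentPreserving MW MV Q := by
  have hsupp : ∀ i f, ∀ j ≠ i, Q (MW i f) j = 0 := fun i f j hj => by
    ext1; simp [hQL, hMW.apply_apply_of_ne hj]
  refine fun i => le_antisymm ?_ fun g hg => ?_
  · rintro _ ⟨f, rfl⟩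
    exact (hMV.mem_range_iff i _).2 (hsupp i f)
  · obtain ⟨f, hf⟩ : (g i : H) ∈ LinearMap.range (L ∘L MW i : lp E 2 →ₗ[𝕜] H) := hV i ▸ (g i).2
    refine ⟨c i • f, lp.ext (funext fun j => ?_)⟩
    by_cases hji : j = i
    · subst hji
      ext1
      simp [hQL, hMW.apply_apply_self, smul_inv_smul₀ (hc j), ← hf]
    · change Q (MW i (c i • f)) j = g j
      rw [hsupp i _ j hji, (hMV.mem_range_iff i g).1 hg j hji]

end SynthesisComp

section Characterization
variable {𝕜 : Type*} [NontriviallyNormedField 𝕜] {I : Type*} [Fintype I] [DecidableEq I]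
  {E : I → Type*} [∀ i, NormedAddCommGroup (E i)] [∀ i, NormedSpace 𝕜 (E i)]
  {H : Type*} [NormedAddCommGroup H] [NormedSpace 𝕜 H]
  {MW : I → lp E 2 →L[𝕜] lp E 2}

theorem isComponentPreserving_and_norm_le_iff {V : I → Submodule 𝕜 H}
    {MV : I → lp (fun i => V i) 2 →L[𝕜] lp (fun i => V i) 2} {c : I → 𝕜}
    {TV : lp (fun i => V i) 2 →L[𝕜] H} (hMW : IsCoordinateProjection MW)
    (hMV : IsCoordinateProjection MV) (hTV : IsSynthesisOperator c TV) (hc : ∀ i, c i ≠ 0)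
    {𝒱 : Submodule 𝕜 H} (hTVran : LinearMap.range (TV : lp (fun i => V i) 2 →ₗ[𝕜] H) = 𝒱)
    (S : H →L[𝕜] lp E 2) (P : H →L[𝕜] H) (ε : ℝ) (Q : lp E 2 →L[𝕜] lp (fun i => V i) 2) :
    (IsComponentPreserving MW MV Q ∧ ‖TV ∘L Q ∘L S - P‖ ≤ ε) ↔
      ∃ L : lp E 2 →L[𝕜] H, ‖L ∘L S - P‖ ≤ ε ∧
        LinearMap.range (L : lp E 2 →ₗ[𝕜] H) = 𝒱 ∧
        (∀ i, V i = LinearMap.range (L ∘L MW i : lp E 2 →ₗ[𝕜] H)) ∧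
        ∀ f i, (Q f i : H) = (c i)⁻¹ • L (MW i f) := by
  constructor
  · rintro ⟨hQ, hnorm⟩
    refine ⟨TV ∘L Q, by rwa [ContinuousLinearMap.comp_assoc], ?_,
      fun i => (hQ.range_synthesis_comp_comp hMV hTV (hc i)).symm,
      fun f i => hQ.coe_apply_eq_inv_smul hMW hMV hTV (hc i) f⟩
    rw [hQ.range_comp_eq_range hMV, hTVran]
  · rintro ⟨L, hnorm, -, hV, hQL⟩
    have hTVQ := hTV.comp_eq_of_coe_apply_eq hMW hc hQL
    exact ⟨isComponentPreserving_of_coe_apply_eq hMW hMV hc hV hQL,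
      by rwa [← ContinuousLinearMap.comp_assoc, hTVQ]⟩

theorem exists_isComponentPreserving_synthesis_comp_eq (hMW : IsCoordinateProjection MW)
    {L : lp E 2 →L[𝕜] H} {V : I → Submodule 𝕜 H}
    (hV : ∀ i, V i = LinearMap.range (L ∘L MW i : lp E 2 →ₗ[𝕜] H)) {c : I → 𝕜}
    (hc : ∀ i, c i ≠ 0) :
    ∃ TV : lp (fun i => V i) 2 →L[𝕜] H, IsSynthesisOperator c TV ∧
      ∃ MV, IsCoordinateProjection MV ∧
        ∃ Q, IsComponentPreserving MW MV Q ∧ TV ∘L Q = L := by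
  obtain ⟨TV, hTV⟩ := exists_isSynthesisOperator (V := V) c
  obtain ⟨MV, hMV⟩ := exists_isCoordinateProjection (𝕜 := 𝕜) (E := fun i => V i)
  obtain ⟨Q, hQ⟩ := lp.exists_clm_apply_eq fun i =>
    ((c i)⁻¹ • L ∘L MW i).codRestrict (V i) fun f => by rw [hV]; exact ⟨(c i)⁻¹ • f, by simp⟩
  have hQL : ∀ f i, (Q f i : H) = (c i)⁻¹ • L (MW i f) := fun f i => by simp [hQ]
  exact ⟨TV, hTV, MV, hMV, Q, isComponentPreserving_of_coe_apply_eq hMW hMV hc hV hQL,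
    hTV.comp_eq_of_coe_apply_eq hMW hc hQL⟩

end Characterization

theorem approx_componentPreserving_dual_characterization_general
    {H : Type*} [NormedAddCommGroup H] [InnerProductSpace ℂ H] [CompleteSpace H]
    {I : Type*} [Fintype I] [DecidableEq I]
    (𝒱 : Submodule ℂ H)
    (P : H →L[ℂ] H)
    (ε : ℝ)
    (W : I → Submodule ℂ H) [∀ i, CompleteSpace (W i)]
    (TW : lp (fun i => W i) 2 →L[ℂ] H)
    (MW : I → (lp (fun i => W i) 2 →L[ℂ] lp (fun i => W i) 2))
    (hMW : ∀ (k : I) (g : lp (fun i => W i) 2) (j : I), MW k g j = if j = k then g j else 0)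
    (V : I → Submodule ℂ H)
    (v : I → ℝ) (hv : ∀ i, 0 < v i)
    (TV : lp (fun i => V i) 2 →L[ℂ] H)
    (hTV : ∀ g : lp (fun i => V i) 2, HasSum (fun i => (v i : ℂ) • (g i : H)) (TV g))
    (hVfr : LinearMap.range (TV : lp (fun i => V i) 2 →ₗ[ℂ] H) = 𝒱)
    (MV : I → (lp (fun i => V i) 2 →L[ℂ] lp (fun i => V i) 2))
    (hMV : ∀ (k : I) (g : lp (fun i => V i) 2) (j : I), MV k g j = if j = k then g j else 0)
    (Q : lp (fun i => W i) 2 →L[ℂ] lp (fun i => V i) 2) :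
    -- first part: the characterization of approximate oblique component preserving duals
    (((∀ i, LinearMap.range (Q ∘L MW i : lp (fun i => W i) 2 →ₗ[ℂ] lp (fun i => V i) 2) = LinearMap.range (MV i : lp (fun i => V i) 2 →ₗ[ℂ] lp (fun i => V i) 2)) ∧
        ‖TV ∘L Q ∘L ContinuousLinearMap.adjoint TW - P‖ ≤ ε) ↔
      (∃ L : lp (fun i => W i) 2 →L[ℂ] H,
        ‖L ∘L ContinuousLinearMap.adjoint TW - P‖ ≤ ε ∧
        LinearMap.range (L : lp (fun i => W i) 2 →ₗ[ℂ] H) = 𝒱 ∧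
        (∀ i, V i = LinearMap.range (L ∘L MW i : lp (fun i => W i) 2 →ₗ[ℂ] H)) ∧
        (∀ (f : lp (fun i => W i) 2) (i : I), (Q f i : H) = ((v i : ℂ))⁻¹ • L (MW i f)))) ∧
    -- second part: every approximate oblique left inverse with range 𝒱 arises this way
    (∀ L : lp (fun i => W i) 2 →L[ℂ] H,
      ‖L ∘L ContinuousLinearMap.adjoint TW - P‖ ≤ ε →
      LinearMap.range (L : lp (fun i => W i) 2 →ₗ[ℂ] H) = 𝒱 →
      ∃ (V' : I → Submodule ℂ H) (v' : I → ℝ),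
        (∀ i, 0 < v' i) ∧ (∀ i, V' i ≤ 𝒱) ∧
        ∃ (TV' : lp (fun i => V' i) 2 →L[ℂ] H),
          (∀ g : lp (fun i => V' i) 2,
            HasSum (fun i => (v' i : ℂ) • (g i : H)) (TV' g)) ∧
          LinearMap.range (TV' : lp (fun i => V' i) 2 →ₗ[ℂ] H) = 𝒱 ∧
          ∃ (MV' : I → (lp (fun i => V' i) 2 →L[ℂ] lp (fun i => V' i) 2)),
            (∀ (k : I) (g : lp (fun i => V' i) 2) (j : I),
              MV' k g j = if j = k then g j else 0) ∧
            ∃ (Q' : lp (fun i => W i) 2 →L[ℂ] lp (fun i => V' i) 2),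
              (∀ i, LinearMap.range (Q' ∘L MW i : lp (fun i => W i) 2 →ₗ[ℂ] lp (fun i => V' i) 2) = LinearMap.range (MV' i : lp (fun i => V' i) 2 →ₗ[ℂ] lp (fun i => V' i) 2)) ∧
              ‖TV' ∘L Q' ∘L ContinuousLinearMap.adjoint TW - P‖ ≤ ε ∧
              TV' ∘L Q' = L) := by
  have hv' : ∀ i, (v i : ℂ) ≠ 0 := fun i => Complex.ofReal_ne_zero.2 (hv i).ne'
  refine ⟨isComponentPreserving_and_norm_le_iff hMW hMV hTV hv' hVfr _ P ε Q,
    fun L hLnorm hLran => ?_⟩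
  obtain ⟨TV', hTV', MV', hMV', Q', hQ', hTVQ'⟩ :=
    exists_isComponentPreserving_synthesis_comp_eq hMW
      (V := fun i => LinearMap.range (L ∘L MW i : lp (fun i => W i) 2 →ₗ[ℂ] H)) (fun _ => rfl)
      (c := fun _ => ((1 : ℝ) : ℂ)) (by simp)
  have hV'le : ∀ i, LinearMap.range (L ∘L MW i : lp (fun i => W i) 2 →ₗ[ℂ] H) ≤ 𝒱 := fun i => by
    rw [← hLran, ContinuousLinearMap.toLinearMap_comp]
    exact LinearMap.range_comp_le_range _ _
  have hTV'ran : LinearMap.range TV'.toLinearMap = 𝒱 := by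
    rw [← hQ'.range_comp_eq_range hMV', hTVQ', hLran]
  have hnorm : ‖TV' ∘L Q' ∘L ContinuousLinearMap.adjoint TW - P‖ ≤ ε := by
    rwa [← ContinuousLinearMap.comp_assoc, hTVQ']
  exact ⟨_, fun _ => 1, fun _ => one_pos, hV'le, TV', hTV', hTV'ran, MV', hMV', Q', hQ', hnorm,
    hTVQ'⟩

/-- Finite-dimensional characterization: `(V,v)` is an `ε`-approximate oblique component
preserving `Q`-dual fusion frame of `(W,w)` on `𝒱` iff `Q = Q_{L,v}` and `V_i = L(M_i(K_W))`
for some `ε`-approximate oblique left inverse `L` of `T_W*` with range `𝒱`; moreover every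
such `L` is of the form `T_V ∘ Q`. -/
theorem approx_componentPreserving_dual_characterization
    {H : Type*} [NormedAddCommGroup H] [InnerProductSpace ℂ H] [CompleteSpace H]
    {I : Type*} [Fintype I] [DecidableEq I]
    (𝒱 𝒲 : Submodule ℂ H) [CompleteSpace 𝒱] [CompleteSpace 𝒲]
    [FiniteDimensional ℂ 𝒱] [FiniteDimensional ℂ 𝒲]
    (P : H →L[ℂ] H) (hPidem : P ∘L P = P)
    (hPran : LinearMap.range (P : H →ₗ[ℂ] H) = 𝒱) (hPker : LinearMap.ker (P : H →ₗ[ℂ] H) = 𝒲ᗮ)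
    (ε : ℝ) (hε : 0 ≤ ε)
    (W : I → Submodule ℂ H) [∀ i, CompleteSpace (W i)] (hW : ∀ i, W i ≤ 𝒲)
    (w : I → ℝ) (hw : ∀ i, 0 < w i)
    (TW : lp (fun i => W i) 2 →L[ℂ] H)
    (hTW : ∀ g : lp (fun i => W i) 2, HasSum (fun i => (w i : ℂ) • (g i : H)) (TW g))
    (hWfr : LinearMap.range (TW : lp (fun i => W i) 2 →ₗ[ℂ] H) = 𝒲)
    (MW : I → (lp (fun i => W i) 2 →L[ℂ] lp (fun i => W i) 2))
    (hMW : ∀ (k : I) (g : lp (fun i => W i) 2) (j : I), MW k g j = if j = k then g j else 0)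
    (V : I → Submodule ℂ H) [∀ i, CompleteSpace (V i)] (hV : ∀ i, V i ≤ 𝒱)
    (v : I → ℝ) (hv : ∀ i, 0 < v i)
    (TV : lp (fun i => V i) 2 →L[ℂ] H)
    (hTV : ∀ g : lp (fun i => V i) 2, HasSum (fun i => (v i : ℂ) • (g i : H)) (TV g))
    (hVfr : LinearMap.range (TV : lp (fun i => V i) 2 →ₗ[ℂ] H) = 𝒱)
    (MV : I → (lp (fun i => V i) 2 →L[ℂ] lp (fun i => V i) 2))
    (hMV : ∀ (k : I) (g : lp (fun i => V i) 2) (j : I), MV k g j = if j = k then g j else 0)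
    (Q : lp (fun i => W i) 2 →L[ℂ] lp (fun i => V i) 2) :
    -- first part: the characterization of approximate oblique component preserving duals
    (((∀ i, LinearMap.range (Q ∘L MW i : lp (fun i => W i) 2 →ₗ[ℂ] lp (fun i => V i) 2) = LinearMap.range (MV i : lp (fun i => V i) 2 →ₗ[ℂ] lp (fun i => V i) 2)) ∧
        ‖TV ∘L Q ∘L ContinuousLinearMap.adjoint TW - P‖ ≤ ε) ↔
      (∃ L : lp (fun i => W i) 2 →L[ℂ] H,
        ‖L ∘L ContinuousLinearMap.adjoint TW - P‖ ≤ ε ∧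
        LinearMap.range (L : lp (fun i => W i) 2 →ₗ[ℂ] H) = 𝒱 ∧
        (∀ i, V i = LinearMap.range (L ∘L MW i : lp (fun i => W i) 2 →ₗ[ℂ] H)) ∧
        (∀ (f : lp (fun i => W i) 2) (i : I), (Q f i : H) = ((v i : ℂ))⁻¹ • L (MW i f)))) ∧
    -- second part: every approximate oblique left inverse with range 𝒱 arises this way
    (∀ L : lp (fun i => W i) 2 →L[ℂ] H,
      ‖L ∘L ContinuousLinearMap.adjoint TW - P‖ ≤ ε →
      LinearMap.range (L : lp (fun i => W i) 2 →ₗ[ℂ] H) = 𝒱 →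
      ∃ (V' : I → Submodule ℂ H) (v' : I → ℝ),
        (∀ i, 0 < v' i) ∧ (∀ i, V' i ≤ 𝒱) ∧
        ∃ (TV' : lp (fun i => V' i) 2 →L[ℂ] H),
          (∀ g : lp (fun i => V' i) 2,
            HasSum (fun i => (v' i : ℂ) • (g i : H)) (TV' g)) ∧
          LinearMap.range (TV' : lp (fun i => V' i) 2 →ₗ[ℂ] H) = 𝒱 ∧
          ∃ (MV' : I → (lp (fun i => V' i) 2 →L[ℂ] lp (fun i => V' i) 2)),
            (∀ (k : I) (g : lp (fun i => V' i) 2) (j : I),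
              MV' k g j = if j = k then g j else 0) ∧
            ∃ (Q' : lp (fun i => W i) 2 →L[ℂ] lp (fun i => V' i) 2),
              (∀ i, LinearMap.range (Q' ∘L MW i : lp (fun i => W i) 2 →ₗ[ℂ] lp (fun i => V' i) 2) = LinearMap.range (MV' i : lp (fun i => V' i) 2 →ₗ[ℂ] lp (fun i => V' i) 2)) ∧
              ‖TV' ∘L Q' ∘L ContinuousLinearMap.adjoint TW - P‖ ≤ ε ∧
              TV' ∘L Q' = L) :=
  approx_componentPreserving_dual_characterization_general 𝒱 P ε W TW MW hMW V v hv TV hTV hVfr MV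
    hMV Q
end

section
/- Let H be a complex Hilbert space, 𝒱 and 𝒲 closed subspaces with H = 𝒱 ⊕ 𝒲ᗮ, P = π_{𝒱,𝒲ᗮ}, and ε ≥ 0. Let (W,w) be a fusion frame for 𝒲 with synthesis operator T_W, and let L : K_W → H be a bounded operator with ‖L T_W* − P‖ ≤ ε. For each i ∈ I let D_i : W_i → W_i be a bounded operator with ‖D_i g − g‖ ≤ ε_i ‖g‖ for all g ∈ W_i, where ε_i ≥ 0, sup_{i∈I} ‖D_i‖ < ∞, and Σ_{i∈I} w_i² ε_i² < ∞. Then for every f ∈ H the family (w_i D_i(π_{W_i} f))_{i∈I} belongs to K_W and ‖L((w_i D_i(π_{W_i} f))_{i∈I}) − P f‖ ≤ (‖L‖ (Σ_{i∈I} w_i² ε_i²)^{1/2} + ε) ‖f‖. -/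
/-!
The analysis operator is `T_W* f = (w_i π_{W_i} f)_i`, so the family `(w_i D_i π_{W_i} f)_i`
is `T_W* f + e` with the error `e_i = w_i (D_i - 1) π_{W_i} f`, and `‖e_i‖² ≤ w_i² ε_i² ‖f‖²`
puts `e` in `ℓ²` with `‖e‖ ≤ (Σ w_i² ε_i²)^{1/2} ‖f‖`. Then
`L (T_W* f + e) - P f = (L T_W* - P) f + L e` gives the bound.
-/

section Synthesis

variable {H : Type*} [NormedAddCommGroup H] [InnerProductSpace ℂ H]
  {I : Type*} {W : I → Submodule ℂ H} {w : I → ℝ} {T : lp (fun i => W i) 2 →L[ℂ] H}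

lemma synthesis_apply_single [DecidableEq I]
    (hT : ∀ g : lp (fun i => W i) 2, HasSum (fun i => (w i : ℂ) • (g i : H)) (T g))
    (i : I) (g : W i) : T (lp.single 2 i g) = (w i : ℂ) • (g : H) := by
  refine (hT _).unique ?_
  convert hasSum_single i fun j (hj : j ≠ i) => ?_ using 1
  · simp
  · simp [Pi.single_eq_of_ne hj]

lemma adjoint_synthesis_apply [CompleteSpace H] [∀ i, CompleteSpace (W i)]
    (hT : ∀ g : lp (fun i => W i) 2, HasSum (fun i => (w i : ℂ) • (g i : H)) (T g))
    (f : H) (i : I) :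
    T.adjoint f i = (w i : ℂ) • (W i).orthogonalProjectionOnto f := by
  classical
  refine ext_inner_left ℂ fun g : W i => ?_
  rw [← lp.inner_single_left (G := fun i => W i), ContinuousLinearMap.adjoint_inner_right,
    synthesis_apply_single hT, inner_smul_left, inner_smul_right, Submodule.inner_orthogonalProjectionOnto_eq_of_mem_left,
    Complex.conj_ofReal]

end Synthesis

section SquareSummable

variable {I : Type*} {E : I → Type*} [∀ i, NormedAddCommGroup (E i)] {c : I → ℝ}

lemma memℓp_two_of_sq_norm_le (hc : Summable c) {g : ∀ i, E i} (hg : ∀ i, ‖g i‖ ^ 2 ≤ c i) :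
    Memℓp g 2 :=
  memℓp_gen <| hc.of_nonneg_of_le (fun i => by positivity) fun i => by simpa using hg i

lemma lp.norm_le_sqrt_tsum_of_sq_norm_le (hc : Summable c) {g : lp E 2}
    (hg : ∀ i, ‖g i‖ ^ 2 ≤ c i) : ‖g‖ ≤ √(∑' i, c i) := by
  have hsq : Summable fun i => ‖g i‖ ^ 2 := by simpa using (lp.memℓp g).summable (by simp)
  refine lp.norm_le_of_tsum_le (by simp) (Real.sqrt_nonneg _) ?_
  have hc₀ : 0 ≤ ∑' i, c i := tsum_nonneg fun i => (sq_nonneg _).trans (hg i)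
  simpa [Real.sq_sqrt hc₀] using hsq.tsum_le_tsum hg hc

end SquareSummable

lemma ContinuousLinearMap.norm_map_add_sub_le {𝕜 E F G : Type*} [NontriviallyNormedField 𝕜]
    [SeminormedAddCommGroup E] [SeminormedAddCommGroup F] [SeminormedAddCommGroup G]
    [NormedSpace 𝕜 E] [NormedSpace 𝕜 F] [NormedSpace 𝕜 G]
    (L : F →L[𝕜] G) (B : E →L[𝕜] F) (P : E →L[𝕜] G) (f : E) (e : F) :
    ‖L (B f + e) - P f‖ ≤ ‖L ∘L B - P‖ * ‖f‖ + ‖L‖ * ‖e‖ :=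
  calc ‖L (B f + e) - P f‖ = ‖(L ∘L B - P) f + L e‖ := by simp [sub_add_eq_add_sub]
    _ ≤ ‖L ∘L B - P‖ * ‖f‖ + ‖L‖ * ‖e‖ := norm_add_le_of_le (le_opNorm _ _) (le_opNorm _ _)

lemma sq_norm_smul_map_orthogonalProjectionOnto_sub_le {H : Type*} [NormedAddCommGroup H]
    [InnerProductSpace ℂ H] (K : Submodule ℂ H) [K.HasOrthogonalProjection] (D : K →L[ℂ] K)
    {δ : ℝ} (hD : ∀ g, ‖D g - g‖ ≤ δ * ‖g‖) (a : ℝ) (f : H) :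
    ‖(a : ℂ) • (D (K.orthogonalProjectionOnto f) - K.orthogonalProjectionOnto f)‖ ^ 2 ≤
      a ^ 2 * δ ^ 2 * ‖f‖ ^ 2 := by
  set g := K.orthogonalProjectionOnto f
  have hDg : ‖D g - g‖ ^ 2 ≤ δ ^ 2 * ‖g‖ ^ 2 := by
    simpa [mul_pow] using pow_le_pow_left₀ (norm_nonneg _) (hD g) 2
  have hg : ‖g‖ ^ 2 ≤ ‖f‖ ^ 2 :=
    pow_le_pow_left₀ (norm_nonneg _) (K.norm_orthogonalProjectionOnto_apply_le f) 2
  rw [norm_smul, Complex.norm_real, Real.norm_eq_abs, mul_pow, sq_abs, mul_assoc]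
  gcongr
  exact hDg.trans (by gcongr)

theorem approx_dual_local_perturbation_general
    {H : Type*} [NormedAddCommGroup H] [InnerProductSpace ℂ H] [CompleteSpace H]
    {I : Type*}
    (P : H →L[ℂ] H)
    (ε : ℝ)
    (W : I → Submodule ℂ H) [∀ i, CompleteSpace (W i)]
    (w : I → ℝ)
    (TW : lp (fun i => W i) 2 →L[ℂ] H)
    (hTW : ∀ g : lp (fun i => W i) 2, HasSum (fun i => (w i : ℂ) • (g i : H)) (TW g))
    (L : lp (fun i => W i) 2 →L[ℂ] H)
    (hLapprox : ‖L ∘L ContinuousLinearMap.adjoint TW - P‖ ≤ ε)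
    (D : ∀ i, W i →L[ℂ] W i) (εl : I → ℝ)
    (hD : ∀ i (g : W i), ‖D i g - g‖ ≤ εl i * ‖g‖)
    (hsum : Summable fun i => w i ^ 2 * εl i ^ 2) :
    ∀ f : H,
      ∃ hmem : Memℓp (fun i => (w i : ℂ) • D i (Submodule.orthogonalProjectionOnto (W i) f)) 2,
        ‖L (⟨fun i => (w i : ℂ) • D i (Submodule.orthogonalProjectionOnto (W i) f), hmem⟩ :
            lp (fun i => W i) 2) - P f‖ ≤
          (‖L‖ * Real.sqrt (∑' i, w i ^ 2 * εl i ^ 2) + ε) * ‖f‖ := by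
  intro f
  set e : ∀ i, W i := fun i => (w i : ℂ) •
    (D i ((W i).orthogonalProjectionOnto f) - (W i).orthogonalProjectionOnto f)
  have hc : Summable fun i => w i ^ 2 * εl i ^ 2 * ‖f‖ ^ 2 := hsum.mul_right _
  have he_sq i : ‖e i‖ ^ 2 ≤ w i ^ 2 * εl i ^ 2 * ‖f‖ ^ 2 :=
    sq_norm_smul_map_orthogonalProjectionOnto_sub_le (W i) (D i) (hD i) (w i) f
  set E : lp (fun i => W i) 2 := ⟨e, memℓp_two_of_sq_norm_le hc he_sq⟩
  have hsplit : (fun i => (w i : ℂ) • D i ((W i).orthogonalProjectionOnto f)) =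
      ⇑(TW.adjoint f + E) := by
    ext i : 1
    rw [lp.coeFn_add, Pi.add_apply, adjoint_synthesis_apply hTW]
    simp only [E, e, smul_sub, add_sub_cancel]
  refine ⟨hsplit ▸ (TW.adjoint f + E).2, ?_⟩
  have hE : ‖E‖ ≤ √(∑' i, w i ^ 2 * εl i ^ 2) * ‖f‖ := by
    have := lp.norm_le_sqrt_tsum_of_sq_norm_le (g := E) hc he_sq
    rwa [tsum_mul_right, Real.sqrt_mul (tsum_nonneg fun i => by positivity),
      Real.sqrt_sq (norm_nonneg f)] at this
  calc _ = ‖L (TW.adjoint f + E) - P f‖ := by congr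
    _ ≤ ‖L ∘L TW.adjoint - P‖ * ‖f‖ + ‖L‖ * ‖E‖ := L.norm_map_add_sub_le _ _ _ _
    _ ≤ ε * ‖f‖ + ‖L‖ * (√(∑' i, w i ^ 2 * εl i ^ 2) * ‖f‖) := by gcongr
    _ = _ := by ring

/-- Perturbation of local reconstruction: if `‖L T_W* − P‖ ≤ ε` and the local operators
`D_i : W_i → W_i` satisfy `‖D_i g − g‖ ≤ ε_i ‖g‖` with `sup_i ‖D_i‖ < ∞` and
`Σ w_i² ε_i² < ∞`, then for every `f` the family `(w_i D_i (π_{W_i} f))_i` lies in `K_W` and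
`‖L((w_i D_i(π_{W_i} f))_i) − P f‖ ≤ (‖L‖ (Σ w_i² ε_i²)^{1/2} + ε) ‖f‖`. -/
theorem approx_dual_local_perturbation
    {H : Type*} [NormedAddCommGroup H] [InnerProductSpace ℂ H] [CompleteSpace H]
    {I : Type*} [Countable I]
    (𝒱 𝒲 : Submodule ℂ H) [CompleteSpace 𝒱] [CompleteSpace 𝒲]
    (P : H →L[ℂ] H) (hPidem : P ∘L P = P)
    (hPran : LinearMap.range (P : H →ₗ[ℂ] H) = 𝒱) (hPker : LinearMap.ker (P : H →ₗ[ℂ] H) = 𝒲ᗮ)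
    (ε : ℝ) (hε : 0 ≤ ε)
    (W : I → Submodule ℂ H) [∀ i, CompleteSpace (W i)] (hW : ∀ i, W i ≤ 𝒲)
    (w : I → ℝ) (hw : ∀ i, 0 < w i)
    (TW : lp (fun i => W i) 2 →L[ℂ] H)
    (hTW : ∀ g : lp (fun i => W i) 2, HasSum (fun i => (w i : ℂ) • (g i : H)) (TW g))
    (hWfr : LinearMap.range (TW : lp (fun i => W i) 2 →ₗ[ℂ] H) = 𝒲)
    (L : lp (fun i => W i) 2 →L[ℂ] H)
    (hLapprox : ‖L ∘L ContinuousLinearMap.adjoint TW - P‖ ≤ ε)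
    (D : ∀ i, W i →L[ℂ] W i) (εl : I → ℝ) (hεl : ∀ i, 0 ≤ εl i)
    (hD : ∀ i (g : W i), ‖D i g - g‖ ≤ εl i * ‖g‖)
    (hDbdd : BddAbove (Set.range fun i => ‖D i‖))
    (hsum : Summable fun i => w i ^ 2 * εl i ^ 2) :
    ∀ f : H,
      ∃ hmem : Memℓp (fun i => (w i : ℂ) • D i (Submodule.orthogonalProjectionOnto (W i) f)) 2,
        ‖L (⟨fun i => (w i : ℂ) • D i (Submodule.orthogonalProjectionOnto (W i) f), hmem⟩ :
            lp (fun i => W i) 2) - P f‖ ≤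
          (‖L‖ * Real.sqrt (∑' i, w i ^ 2 * εl i ^ 2) + ε) * ‖f‖ :=
  approx_dual_local_perturbation_general P ε W w TW hTW L hLapprox D εl hD hsum
end

section
/- Let H be a complex Hilbert space, P a bounded idempotent operator on H, and S a bounded operator on H with S ∘ P = S (equivalently, ker P ⊆ ker S) and ‖P − S‖ ≤ ε for some ε ≥ 0. For N ∈ ℕ set A_N = Σ_{n=0}^{N} (P − S)^n. Then P − A_N ∘ S = (P − S)^{N+1}, and consequently ‖P − A_N S‖ ≤ ε^{N+1}. -/
set_option maxHeartbeats 1000000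
noncomputable section

/-- Better approximation: if `P` is a bounded idempotent, `S ∘ P = S` and `‖P − S‖ ≤ ε`,
then with `A_N = Σ_{n=0}^N (P − S)^n` one has `P − A_N S = (P − S)^{N+1}`, hence
`‖P − A_N S‖ ≤ ε^{N+1}`. -/
theorem better_approximation_partial_sums
    {H : Type*} [NormedAddCommGroup H] [InnerProductSpace ℂ H] [CompleteSpace H]
    (P S : H →L[ℂ] H) (hPidem : P * P = P) (hSP : S * P = S)
    (ε : ℝ) (hε : 0 ≤ ε) (hPS : ‖P - S‖ ≤ ε) (N : ℕ) :
    P - (∑ n ∈ Finset.range (N + 1), (P - S) ^ n) * S = (P - S) ^ (N + 1) ∧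
    ‖P - (∑ n ∈ Finset.range (N + 1), (P - S) ^ n) * S‖ ≤ ε ^ (N + 1) := by
  have hDP : (P - S) * P = P - S := by
    rw [sub_mul, hPidem, hSP]
  have key : P - (∑ n ∈ Finset.range (N + 1), (P - S) ^ n) * S = (P - S) ^ (N + 1) := by
    induction N with
    | zero => simp [sub_sub_cancel, pow_one]
    | succ k ih =>
        rw [Finset.sum_range_succ, add_mul, ← sub_sub, ih]
        calc (P - S) ^ (k + 1) - (P - S) ^ (k + 1) * S
            = (P - S) ^ (k + 1) * P - (P - S) ^ (k + 1) * S := by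
              rw [show (P - S) ^ (k + 1) * P = (P - S) ^ (k + 1) from by
                rw [pow_succ, mul_assoc, hDP]]
          _ = (P - S) ^ (k + 2) := by rw [← mul_sub, ← pow_succ]
  refine ⟨key, ?_⟩
  rw [key]
  calc ‖(P - S) ^ (N + 1)‖ ≤ ‖P - S‖ ^ (N + 1) := norm_pow_le' _ (Nat.succ_pos N)
    _ ≤ ε ^ (N + 1) := pow_le_pow_left₀ (norm_nonneg _) hPS _
end
end

section
/- Let H be a complex Hilbert space, P a bounded idempotent operator on H with range 𝒱, and S a bounded operator on H with S ∘ P = S, range of S contained in 𝒱, and ‖P − S‖ ≤ ε for some 0 ≤ ε < 1. Let A = (id_H − (P − S))⁻¹ = Σ_{n=0}^{∞} (P − S)^n (which exists by the Neumann series). Then A ∘ S = P, P − A ∘ S ∘ A = id_H − A, and ‖P − A S A‖ = ‖id_H − A‖ ≤ ε/(1 − ε). -/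
/-!
Write `T = P - S`. Since `S P = S`, `(1 - T) P = S`, so multiplying by `A = (1 - T)⁻¹`
gives `A S = P`. Since `range S ⊆ range P` and `P` is idempotent, `P S = S`, hence `P T = T`;
together with `1 - A = -T A` this gives `P (1 - A) = 1 - A`, i.e. `P - A S A = P - P A = 1 - A`.
Finally `‖1 - A‖ = ‖T A‖ ≤ ε ‖A‖ ≤ ε (1 + ‖1 - A‖)`, which rearranges to the bound.
-/

theorem ContinuousLinearMap.mul_eq_right_of_range_le {R M : Type*} [Ring R] [TopologicalSpace M]
    [AddCommGroup M] [Module R M] {P S : M →L[R] M} (hP : IsIdempotentElem P)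
    (h : LinearMap.range (S : M →ₗ[R] M) ≤ LinearMap.range (P : M →ₗ[R] M)) : P * S = S :=
  coe_injective <|
    (LinearMap.IsIdempotentElem.comp_eq_right_iff (isIdempotentElem_toLinearMap_iff.2 hP) _).2 h

section Ring

variable {R : Type*} [Ring R] {P S T A : R}

theorem one_sub_eq_neg_mul_of_one_sub_mul_eq_one (hA : (1 - T) * A = 1) : 1 - A = -(T * A) := by
  rw [← hA, sub_mul, one_mul]
  abel

theorem one_sub_sub_mul_eq (hP : IsIdempotentElem P) (hSP : S * P = S) :
    (1 - (P - S)) * P = S := by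
  rw [sub_mul, one_mul, sub_mul, hP.eq, hSP, sub_sub_cancel]

theorem mul_eq_of_mul_one_sub_sub_eq_one (hP : IsIdempotentElem P) (hSP : S * P = S)
    (hA : A * (1 - (P - S)) = 1) : A * S = P := by
  rw [← one_sub_sub_mul_eq hP hSP, ← mul_assoc, hA, one_mul]

theorem sub_mul_mul_eq_one_sub (hP : IsIdempotentElem P) (hSP : S * P = S) (hPS : P * S = S)
    (hA₁ : A * (1 - (P - S)) = 1) (hA₂ : (1 - (P - S)) * A = 1) : P - A * S * A = 1 - A := by
  have hPT : P * (P - S) = P - S := by rw [mul_sub, hP.eq, hPS]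
  calc P - A * S * A = P * (1 - A) := by
        rw [mul_eq_of_mul_one_sub_sub_eq_one hP hSP hA₁, mul_sub, mul_one]
    _ = 1 - A := by
        rw [one_sub_eq_neg_mul_of_one_sub_mul_eq_one hA₂, mul_neg, ← mul_assoc, hPT]

end Ring

theorem norm_one_sub_le_of_one_sub_mul_eq_one {R : Type*} [SeminormedRing R]
    (h1 : ‖(1 : R)‖ ≤ 1) {T A : R} {ε : ℝ} (hT : ‖T‖ ≤ ε) (hε : ε < 1) (hA : (1 - T) * A = 1) :
    ‖1 - A‖ ≤ ε / (1 - ε) := by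
  have hε0 : 0 ≤ ε := (norm_nonneg T).trans hT
  have hA_norm : ‖A‖ ≤ 1 + ‖1 - A‖ :=
    calc ‖A‖ = ‖1 - (1 - A)‖ := by rw [sub_sub_cancel]
      _ ≤ ‖(1 : R)‖ + ‖1 - A‖ := norm_sub_le _ _
      _ ≤ 1 + ‖1 - A‖ := by gcongr
  have h : ‖1 - A‖ ≤ ε * (1 + ‖1 - A‖) :=
    calc ‖1 - A‖ = ‖T * A‖ := by rw [one_sub_eq_neg_mul_of_one_sub_mul_eq_one hA, norm_neg]
      _ ≤ ‖T‖ * ‖A‖ := norm_mul_le _ _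
      _ ≤ ε * (1 + ‖1 - A‖) := by gcongr
  rw [le_div_iff₀ (sub_pos.2 hε)]
  linarith

theorem neumann_inverse_gives_exact_dual_general
    {H : Type*} [NormedAddCommGroup H] [InnerProductSpace ℂ H]
    (𝒱 : Submodule ℂ H)
    (P S : H →L[ℂ] H) (hPidem : P * P = P) (hPran : LinearMap.range (P : H →ₗ[ℂ] H) = 𝒱)
    (hSP : S * P = S) (hSran : LinearMap.range (S : H →ₗ[ℂ] H) ≤ 𝒱)
    (ε : ℝ) (hε1 : ε < 1) (hPS : ‖P - S‖ ≤ ε)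
    -- `A = (id − (P − S))⁻¹`, which exists by the Neumann series
    (A : H →L[ℂ] H) (hA₁ : A * (1 - (P - S)) = 1) (hA₂ : (1 - (P - S)) * A = 1) :
    A * S = P ∧
    P - A * S * A = 1 - A ∧
    ‖P - A * S * A‖ = ‖1 - A‖ ∧
    ‖1 - A‖ ≤ ε / (1 - ε) := by
  have hP : IsIdempotentElem P := hPidem
  have hPS' : P * S = S := ContinuousLinearMap.mul_eq_right_of_range_le hP (hPran ▸ hSran)
  have hexact : P - A * S * A = 1 - A := sub_mul_mul_eq_one_sub hP hSP hPS' hA₁ hA₂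
  exact ⟨mul_eq_of_mul_one_sub_sub_eq_one hP hSP hA₁, hexact, by rw [hexact],
    norm_one_sub_le_of_one_sub_mul_eq_one ContinuousLinearMap.norm_id_le hPS hε1 hA₂⟩

/-- Exact duals from approximate ones: if `P` is a bounded idempotent with range `𝒱`,
`S ∘ P = S`, `range S ⊆ 𝒱` and `‖P − S‖ ≤ ε < 1`, then for
`A = (id − (P − S))⁻¹ = Σ_{n≥0} (P − S)^n` one has `A S = P`,
`P − A S A = id − A` and `‖P − A S A‖ = ‖id − A‖ ≤ ε / (1 − ε)`. -/
theorem neumann_inverse_gives_exact_dual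
    {H : Type*} [NormedAddCommGroup H] [InnerProductSpace ℂ H] [CompleteSpace H]
    (𝒱 : Submodule ℂ H) [CompleteSpace 𝒱]
    (P S : H →L[ℂ] H) (hPidem : P * P = P) (hPran : LinearMap.range (P : H →ₗ[ℂ] H) = 𝒱)
    (hSP : S * P = S) (hSran : LinearMap.range (S : H →ₗ[ℂ] H) ≤ 𝒱)
    (ε : ℝ) (hε0 : 0 ≤ ε) (hε1 : ε < 1) (hPS : ‖P - S‖ ≤ ε)
    -- `A = (id − (P − S))⁻¹`, which exists by the Neumann series
    (A : H →L[ℂ] H) (hA₁ : A * (1 - (P - S)) = 1) (hA₂ : (1 - (P - S)) * A = 1) :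
    A * S = P ∧
    P - A * S * A = 1 - A ∧
    ‖P - A * S * A‖ = ‖1 - A‖ ∧
    ‖1 - A‖ ≤ ε / (1 - ε) :=
  neumann_inverse_gives_exact_dual_general 𝒱 P S hPidem hPran hSP hSran ε hε1 hPS A hA₁ hA₂
end

section
/- Let H and K be complex Hilbert spaces with H ≠ {0}, and let A, B : H → K be bounded operators with B ≠ 0 and ker A ⊆ ker B. Then γ(A) − γ(B) ≤ ‖B − A‖, where γ(T) = inf{‖Tx‖ : ‖x‖ = 1, x ∈ (ker T)ᗮ} is the reduced minimum modulus. -/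
/-!
Since `ker A ⊆ ker B`, every unit vector `x ∈ (ker B)ᗮ` is also admissible for `γ(A)`, so
`γ(A) ≤ ‖A x‖ ≤ ‖B x‖ + ‖B - A‖`. As `B ≠ 0`, such vectors exist, and taking the infimum over
them gives `γ(A) ≤ γ(B) + ‖B - A‖`.
-/

set_option maxHeartbeats 1000000
noncomputable section

theorem Submodule.exists_norm_eq_one_mem_orthogonal {𝕜 E : Type*} [RCLike 𝕜]
    [NormedAddCommGroup E] [InnerProductSpace 𝕜 E] {K : Submodule 𝕜 E}
    [K.HasOrthogonalProjection] (hK : K ≠ ⊤) : ∃ x, ‖x‖ = 1 ∧ x ∈ Kᗮ := by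
  obtain ⟨z, hz, hz0⟩ :=
    Submodule.exists_mem_ne_zero_of_ne_bot (mt Submodule.orthogonal_eq_bot_iff.mp hK)
  exact ⟨_, norm_smul_inv_norm hz0, Kᗮ.smul_mem _ hz⟩

section

variable {E F : Type*} [NormedAddCommGroup E] [InnerProductSpace ℂ E]
  [NormedAddCommGroup F] [InnerProductSpace ℂ F]

theorem redMinMod_le_norm_apply (T : E →L[ℂ] F) {x : E} (hx : ‖x‖ = 1)
    (hxT : x ∈ (LinearMap.ker (T : E →ₗ[ℂ] F))ᗮ) : redMinMod T ≤ ‖T x‖ :=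
  csInf_le ⟨0, by rintro _ ⟨y, _, rfl⟩; exact norm_nonneg _⟩ ⟨x, ⟨hx, hxT⟩, rfl⟩

theorem le_redMinMod [CompleteSpace E] {T : E →L[ℂ] F} (hT : T ≠ 0) {c : ℝ}
    (h : ∀ x, ‖x‖ = 1 → x ∈ (LinearMap.ker (T : E →ₗ[ℂ] F))ᗮ → c ≤ ‖T x‖) :
    c ≤ redMinMod T := by
  have : CompleteSpace (LinearMap.ker (T : E →ₗ[ℂ] F)) := T.isClosed_ker.completeSpace_coe
  have hker : LinearMap.ker (T : E →ₗ[ℂ] F) ≠ ⊤ :=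
    fun h => hT (ContinuousLinearMap.coe_injective (LinearMap.ker_eq_top.mp h))
  obtain ⟨x, hx, hxT⟩ := Submodule.exists_norm_eq_one_mem_orthogonal hker
  refine le_csInf ⟨_, x, ⟨hx, hxT⟩, rfl⟩ ?_
  rintro _ ⟨y, ⟨hy, hyT⟩, rfl⟩
  exact h y hy hyT

end

theorem redMinMod_sub_redMinMod_le_general
    {H K : Type*} [NormedAddCommGroup H] [InnerProductSpace ℂ H] [CompleteSpace H]
    [NormedAddCommGroup K] [InnerProductSpace ℂ K]
    (A B : H →L[ℂ] K) (hB : B ≠ 0) (hker : LinearMap.ker (A : H →ₗ[ℂ] K) ≤ LinearMap.ker (B : H →ₗ[ℂ] K)) :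
    redMinMod A - redMinMod B ≤ ‖B - A‖ := by
  suffices redMinMod A - ‖B - A‖ ≤ redMinMod B by linarith
  refine le_redMinMod hB fun x hx hxB => ?_
  have hxA := Submodule.orthogonal_le hker hxB
  calc redMinMod A - ‖B - A‖ ≤ ‖A x‖ - ‖(B - A) x‖ :=
        sub_le_sub (redMinMod_le_norm_apply A hx hxA) ((B - A).unit_le_opNorm x hx.le)
    _ ≤ ‖A x + (B - A) x‖ := norm_sub_le_norm_add _ _
    _ = ‖B x‖ := by simp

/-- If `ker A ⊆ ker B` and `B ≠ 0`, then `γ(A) − γ(B) ≤ ‖B − A‖`. -/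
theorem redMinMod_sub_redMinMod_le
    {H K : Type*} [NormedAddCommGroup H] [InnerProductSpace ℂ H] [CompleteSpace H]
    [NormedAddCommGroup K] [InnerProductSpace ℂ K] [CompleteSpace K]
    [Nontrivial H]
    (A B : H →L[ℂ] K) (hB : B ≠ 0) (hker : LinearMap.ker (A : H →ₗ[ℂ] K) ≤ LinearMap.ker (B : H →ₗ[ℂ] K)) :
    redMinMod A - redMinMod B ≤ ‖B - A‖ :=
  redMinMod_sub_redMinMod_le_general A B hB hker
end
end

section
/- Let H be a complex Hilbert space, 𝒱 a closed subspace, and (V,v) = ((V_i, v_i))_{i∈I} a fusion Bessel sequence with every V_i ⊆ 𝒱, V_i ≠ {0}, and synthesis operator T_V. Let A and A_n (n ∈ ℕ) be bounded operators on H such that A is bijective with bounded inverse, ‖A_n − A‖ → 0, and A(𝒱) ⊆ 𝒱 and A_n(𝒱) ⊆ 𝒱 for all n. Let ṽ = (ṽ_i)_{i∈I} be weights and δ > 0 with δ ≤ v_i/ṽ_i for all i ∈ I. Then there exists n₀ ∈ ℕ such that for every n ≥ n₀: each A_n(V_i) is a closed subspace of 𝒱 and (A_n(V_i), ṽ_i)_{i∈I}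 is a fusion Bessel sequence for 𝒱, i.e., there is a constant C with Σ_{i∈I} ṽ_i² ‖π_{A_n(V_i)} f‖² ≤ C ‖f‖² for all f ∈ H. -/
/-!
For large `n` the operator `A_n` is invertible, since the invertible operators form an open set;
so `A_n` maps closed subspaces onto closed subspaces and is bounded below, `‖x‖ ≤ K ‖A_n x‖`.
Writing `π_{A_n V_i} f = A_n x` with `x ∈ V_i`,
`‖π_{A_n V_i} f‖² = ⟪x, A_n* f⟫ = ⟪x, π_{V_i} A_n* f⟫ ≤ K ‖π_{A_n V_i} f‖ ‖π_{V_i} A_n* f‖`,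
so the Bessel inequality of `(V, v)`, applied to `A_n* f`, transfers to `(A_n V_i, ṽ_i)` at the
cost of the factor `δ⁻² K² ‖A_n‖²`. The Bessel inequality of `(V, v)` itself, with constant
`‖T_V‖²`, comes from testing `T_V` against the finitely supported `g = (v_i π_{V_i} f)_{i ∈ S}`.
-/

open scoped NNReal InnerProductSpace
open ContinuousLinearMap Submodule RCLike Filter

section FusionBessel

variable {𝕜 E F : Type*} [RCLike 𝕜] [NormedAddCommGroup E] [InnerProductSpace 𝕜 E]
  [NormedAddCommGroup F] [InnerProductSpace 𝕜 F]

theorem le_of_sq_le_mul {a b : ℝ} (hb : 0 ≤ b) (h : a ^ 2 ≤ a * b) : a ≤ b := by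
  nlinarith

theorem re_inner_starProjection_eq_norm_sq (K : Submodule 𝕜 E) [K.HasOrthogonalProjection]
    (f : E) : re ⟪K.starProjection f, f⟫_𝕜 = ‖K.starProjection f‖ ^ 2 := by
  rw [starProjection_apply, ← inner_orthogonalProjectionOnto_eq_of_mem_left, Submodule.coe_inner,
    inner_self_eq_norm_sq]

theorem norm_starProjection_map_le [CompleteSpace E] [CompleteSpace F]
    {T : E →L[𝕜] F} {K : ℝ≥0} (hT : AntilipschitzWith K T)
    (W : Submodule 𝕜 E) [W.HasOrthogonalProjection]
    [(W.map (T : E →ₗ[𝕜] F)).HasOrthogonalProjection] (f : F) :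
    ‖(W.map (T : E →ₗ[𝕜] F)).starProjection f‖ ≤ K * ‖W.starProjection (adjoint T f)‖ := by
  set M := W.map (T : E →ₗ[𝕜] F)
  obtain ⟨x, hxW, hTx⟩ := Submodule.mem_map.1 (M.orthogonalProjectionOnto f).2
  replace hTx : T x = M.starProjection f := hTx
  have hx : ‖x‖ ≤ K * ‖M.starProjection f‖ := hTx ▸ T.bound_of_antilipschitz hT x
  refine le_of_sq_le_mul (by positivity) ?_
  calc ‖M.starProjection f‖ ^ 2 = re ⟪T x, f⟫_𝕜 := by
        rw [hTx, re_inner_starProjection_eq_norm_sq]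
    _ = re ⟪x, W.starProjection (adjoint T f)⟫_𝕜 := by
        rw [← adjoint_inner_right, starProjection_apply,
          ← inner_orthogonalProjectionOnto_eq_of_mem_left ⟨x, hxW⟩]
        rfl
    _ ≤ ‖x‖ * ‖W.starProjection (adjoint T f)‖ := re_inner_le_norm _ _
    _ ≤ ‖M.starProjection f‖ * (K * ‖W.starProjection (adjoint T f)‖) := by
        nlinarith [norm_nonneg (W.starProjection (adjoint T f))]

variable {I : Type*}

theorem apply_lp_single_of_hasSum [DecidableEq I] {V : I → Submodule 𝕜 E} {v : I → ℝ}
    {TV : lp (fun i => V i) 2 →L[𝕜] E}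
    (hTV : ∀ g : lp (fun i => V i) 2, HasSum (fun i => (v i : 𝕜) • (g i : E)) (TV g))
    (i : I) (x : V i) : TV (lp.single 2 i x) = (v i : 𝕜) • (x : E) := by
  refine ((hTV _).unique (hasSum_single i fun j hj => ?_)).trans ?_
  · rw [lp.single_apply_ne (E := fun i => V i) 2 i x hj, ZeroMemClass.coe_zero, smul_zero]
  · rw [lp.single_apply_self (E := fun i => V i)]

theorem sum_sq_norm_starProjection_le_of_hasSum {V : I → Submodule 𝕜 E}
    [∀ i, (V i).HasOrthogonalProjection] {v : I → ℝ} {TV : lp (fun i => V i) 2 →L[𝕜] E}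
    (hTV : ∀ g : lp (fun i => V i) 2, HasSum (fun i => (v i : 𝕜) • (g i : E)) (TV g))
    (f : E) (S : Finset I) :
    ∑ i ∈ S, v i ^ 2 * ‖(V i).starProjection f‖ ^ 2 ≤ (‖TV‖ * ‖f‖) ^ 2 := by
  classical
  set c : ∀ i, V i := fun i => (v i : 𝕜) • (V i).orthogonalProjectionOnto f
  set g : lp (fun i => V i) 2 := ∑ i ∈ S, lp.single 2 i (c i)
  have hg : ‖g‖ ^ 2 = ∑ i ∈ S, v i ^ 2 * ‖(V i).starProjection f‖ ^ 2 := by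
    have := lp.norm_sum_single (p := 2) (by norm_num) c S
    simp only [ENNReal.toReal_ofNat, Real.rpow_two] at this
    rw [this]
    refine Finset.sum_congr rfl fun i _ => ?_
    simp [c, norm_smul, mul_pow]
  have hTVg : re ⟪TV g, f⟫_𝕜 = ‖g‖ ^ 2 := by
    rw [hg, map_sum, sum_inner, map_sum]
    refine Finset.sum_congr rfl fun i _ => ?_
    rw [apply_lp_single_of_hasSum hTV]
    simp only [c, coe_smul, inner_smul_left, conj_ofReal]
    rw [re_ofReal_mul, re_ofReal_mul, ← starProjection_apply, re_inner_starProjection_eq_norm_sq]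
    ring
  have key : ‖g‖ ^ 2 ≤ ‖g‖ * (‖TV‖ * ‖f‖) :=
    calc ‖g‖ ^ 2 = re ⟪TV g, f⟫_𝕜 := hTVg.symm
      _ ≤ ‖TV g‖ * ‖f‖ := re_inner_le_norm _ _
      _ ≤ ‖TV‖ * ‖g‖ * ‖f‖ := by gcongr; exact TV.le_opNorm g
      _ = ‖g‖ * (‖TV‖ * ‖f‖) := by ring
  rw [← hg]
  gcongr
  exact le_of_sq_le_mul (by positivity) key

def FusionBesselBound (W : I → Submodule 𝕜 E) [∀ i, (W i).HasOrthogonalProjection] (w : I → ℝ)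
    (C : ℝ) : Prop :=
  ∀ f : E, Summable (fun i => w i ^ 2 * ‖(W i).starProjection f‖ ^ 2) ∧
    ∑' i, w i ^ 2 * ‖(W i).starProjection f‖ ^ 2 ≤ C * ‖f‖ ^ 2

theorem fusionBesselBound_of_hasSum_synthesis {V : I → Submodule 𝕜 E}
    [∀ i, (V i).HasOrthogonalProjection] {v : I → ℝ} {TV : lp (fun i => V i) 2 →L[𝕜] E}
    (hTV : ∀ g : lp (fun i => V i) 2, HasSum (fun i => (v i : 𝕜) • (g i : E)) (TV g)) :
    FusionBesselBound V v (‖TV‖ ^ 2) := by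
  intro f
  have hfin := sum_sq_norm_starProjection_le_of_hasSum hTV f
  have hsum := summable_of_sum_le (fun i => by positivity) hfin
  exact ⟨hsum, mul_pow ‖TV‖ ‖f‖ 2 ▸ hsum.tsum_le_of_sum_le hfin⟩

theorem FusionBesselBound.map_of_antilipschitz [CompleteSpace E] [CompleteSpace F]
    {W : I → Submodule 𝕜 E} [∀ i, (W i).HasOrthogonalProjection] {w w' : I → ℝ} {C : ℝ}
    (hW : FusionBesselBound W w C) (hC : 0 ≤ C) {T : E →L[𝕜] F} {K : ℝ≥0}
    (hT : AntilipschitzWith K T) [∀ i, (W i |>.map (T : E →ₗ[𝕜] F)).HasOrthogonalProjection]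
    {a : ℝ} (hw'_nonneg : ∀ i, 0 ≤ w' i) (hw'_le : ∀ i, w' i ≤ a * w i) :
    FusionBesselBound (fun i => (W i).map (T : E →ₗ[𝕜] F)) w' (a ^ 2 * K ^ 2 * C * ‖T‖ ^ 2) := by
  intro f
  obtain ⟨hsum, hle⟩ := hW (adjoint T f)
  have hterm : ∀ i, w' i ^ 2 * ‖((W i).map (T : E →ₗ[𝕜] F)).starProjection f‖ ^ 2 ≤
      (a ^ 2 * K ^ 2) * (w i ^ 2 * ‖(W i).starProjection (adjoint T f)‖ ^ 2) := by
    intro i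
    have hproj := norm_starProjection_map_le hT (W i) f
    calc _ ≤ (a * w i) ^ 2 * (K * ‖(W i).starProjection (adjoint T f)‖) ^ 2 := by
          gcongr
          · exact hw'_nonneg i
          · exact hw'_le i
      _ = _ := by ring
  have hsum' := hsum.mul_left (a ^ 2 * K ^ 2)
  have hsummable := Summable.of_nonneg_of_le (fun i => by positivity) hterm hsum'
  refine ⟨hsummable, ?_⟩
  calc _ ≤ ∑' i, (a ^ 2 * K ^ 2) * (w i ^ 2 * ‖(W i).starProjection (adjoint T f)‖ ^ 2) :=
        hsummable.tsum_le_tsum hterm hsum'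
    _ ≤ (a ^ 2 * K ^ 2) * (C * ‖adjoint T f‖ ^ 2) := by
        rw [tsum_mul_left]; gcongr
    _ ≤ (a ^ 2 * K ^ 2) * (C * (‖T‖ * ‖f‖) ^ 2) := by
        gcongr
        simpa [adjoint.norm_map] using (adjoint T).le_opNorm f
    _ = _ := by ring

end FusionBessel

theorem fusionBessel_of_norm_tendsto_general
    {H : Type*} [NormedAddCommGroup H] [InnerProductSpace ℂ H] [CompleteSpace H]
    {I : Type*}
    (𝒱 : Submodule ℂ H)
    (V : I → Submodule ℂ H) [∀ i, CompleteSpace (V i)]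
    (hV : ∀ i, V i ≤ 𝒱)
    (v : I → ℝ)
    (TV : lp (fun i => V i) 2 →L[ℂ] H)
    (hTV : ∀ g : lp (fun i => V i) 2, HasSum (fun i => (v i : ℂ) • (g i : H)) (TV g))
    -- `A` bijective on `H` with bounded inverse, `A_n → A` in operator norm
    (A : H ≃L[ℂ] H) (An : ℕ → (H →L[ℂ] H))
    (hAn : Filter.Tendsto (fun n => ‖An n - (A : H →L[ℂ] H)‖) Filter.atTop (nhds 0))
    (hAn𝒱 : ∀ n, ∀ x ∈ 𝒱, An n x ∈ 𝒱)
    (vt : I → ℝ) (hvt : ∀ i, 0 < vt i)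
    (δ : ℝ) (hδ : 0 < δ) (hδle : ∀ i, δ ≤ v i / vt i) :
    ∃ n₀ : ℕ, ∀ n ≥ n₀,
      ∃ hcl : ∀ i, IsClosed ((Submodule.map (An n : H →ₗ[ℂ] H) (V i) : Submodule ℂ H) : Set H),
        (∀ i, Submodule.map (An n : H →ₗ[ℂ] H) (V i) ≤ 𝒱) ∧
        ∃ C : ℝ, ∀ f : H,
          haveI : ∀ i, CompleteSpace (Submodule.map (An n : H →ₗ[ℂ] H) (V i) : Submodule ℂ H) :=
            fun i => (hcl i).completeSpace_coe
          (Summable fun i =>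
              (vt i) ^ 2 * ‖(Submodule.orthogonalProjectionOnto (Submodule.map (An n : H →ₗ[ℂ] H) (V i)) f : H)‖ ^ 2) ∧
          ∑' i, (vt i) ^ 2 * ‖(Submodule.orthogonalProjectionOnto (Submodule.map (An n : H →ₗ[ℂ] H) (V i)) f : H)‖ ^ 2 ≤
            C * ‖f‖ ^ 2 := by
  have hinv : ∀ᶠ n in atTop, ∃ e : H ≃L[ℂ] H, (e : H →L[ℂ] H) = An n :=
    (tendsto_iff_norm_sub_tendsto_zero.2 hAn) (ContinuousLinearEquiv.isOpen.mem_nhds ⟨A, rfl⟩)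
  obtain ⟨n₀, hn₀⟩ := eventually_atTop.1 hinv
  refine ⟨n₀, fun n hn => ?_⟩
  obtain ⟨e, he⟩ := hn₀ n hn
  have h𝒱 : ∀ i, Submodule.map (An n : H →ₗ[ℂ] H) (V i) ≤ 𝒱 := fun i =>
    map_le_iff_le_comap.2 fun x hx => hAn𝒱 n x (hV i hx)
  have hweight : ∀ i, vt i ≤ δ⁻¹ * v i := fun i => by
    rw [inv_mul_eq_div, le_div_iff₀' hδ, ← le_div_iff₀ (hvt i)]
    exact hδle i
  rw [← he] at h𝒱 ⊢
  have hcl : ∀ i, IsClosed (Submodule.map ((e : H →L[ℂ] H) : H →ₗ[ℂ] H) (V i) : Set H) := by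
    intro i
    rw [map_coe]
    exact e.toHomeomorph.isClosedMap _ (completeSpace_coe_iff_isComplete.1 inferInstance).isClosed
  have := fun i => (hcl i).completeSpace_coe
  exact ⟨hcl, h𝒱, _, (fusionBesselBound_of_hasSum_synthesis hTV).map_of_antilipschitz
    (sq_nonneg _) e.antilipschitz (fun i => (hvt i).le) hweight⟩

/-- If `(V,v)` is a fusion Bessel sequence inside `𝒱`, `A` is invertible with `A(𝒱) ⊆ 𝒱`,
`A_n → A` in norm with `A_n(𝒱) ⊆ 𝒱`, and `δ ≤ v i / ṽ i`, then for all large `n` the family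
`(A_n(V_i), ṽ_i)` is a fusion Bessel sequence for `𝒱`. -/
theorem fusionBessel_of_norm_tendsto
    {H : Type*} [NormedAddCommGroup H] [InnerProductSpace ℂ H] [CompleteSpace H]
    {I : Type*} [Countable I]
    (𝒱 : Submodule ℂ H) [CompleteSpace 𝒱]
    (V : I → Submodule ℂ H) [∀ i, CompleteSpace (V i)]
    (hV : ∀ i, V i ≤ 𝒱) (hVne : ∀ i, V i ≠ ⊥)
    (v : I → ℝ) (hv : ∀ i, 0 < v i)
    (TV : lp (fun i => V i) 2 →L[ℂ] H)
    (hTV : ∀ g : lp (fun i => V i) 2, HasSum (fun i => (v i : ℂ) • (g i : H)) (TV g))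
    -- `A` bijective on `H` with bounded inverse, `A_n → A` in operator norm
    (A : H ≃L[ℂ] H) (An : ℕ → (H →L[ℂ] H))
    (hAn : Filter.Tendsto (fun n => ‖An n - (A : H →L[ℂ] H)‖) Filter.atTop (nhds 0))
    (hA𝒱 : ∀ x ∈ 𝒱, A x ∈ 𝒱) (hAn𝒱 : ∀ n, ∀ x ∈ 𝒱, An n x ∈ 𝒱)
    (vt : I → ℝ) (hvt : ∀ i, 0 < vt i)
    (δ : ℝ) (hδ : 0 < δ) (hδle : ∀ i, δ ≤ v i / vt i) :
    ∃ n₀ : ℕ, ∀ n ≥ n₀,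
      ∃ hcl : ∀ i, IsClosed ((Submodule.map (An n : H →ₗ[ℂ] H) (V i) : Submodule ℂ H) : Set H),
        (∀ i, Submodule.map (An n : H →ₗ[ℂ] H) (V i) ≤ 𝒱) ∧
        ∃ C : ℝ, ∀ f : H,
          haveI : ∀ i, CompleteSpace (Submodule.map (An n : H →ₗ[ℂ] H) (V i) : Submodule ℂ H) :=
            fun i => (hcl i).completeSpace_coe
          (Summable fun i =>
              (vt i) ^ 2 * ‖(Submodule.orthogonalProjectionOnto (Submodule.map (An n : H →ₗ[ℂ] H) (V i)) f : H)‖ ^ 2) ∧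
          ∑' i, (vt i) ^ 2 * ‖(Submodule.orthogonalProjectionOnto (Submodule.map (An n : H →ₗ[ℂ] H) (V i)) f : H)‖ ^ 2 ≤
            C * ‖f‖ ^ 2 :=
  fusionBessel_of_norm_tendsto_general 𝒱 V hV v TV hTV A An hAn hAn𝒱 vt hvt δ hδ hδle
end

section
/- Let H be a complex Hilbert space, 𝒱 and 𝒲 closed subspaces with H = 𝒱 ⊕ 𝒲ᗮ, and P = π_{𝒱,𝒲ᗮ}. Let (W,w) be a fusion frame for 𝒲 with synthesis operator T_W, let (V,v) be a fusion frame for 𝒱 with synthesis operator T_V, and let Q : K_W → K_V be a bounded operator with T_V Q T_W* = P (an oblique Q-dual fusion frame pair). Let ε ≥ 0, f ∈ H, and f_r ∈ 𝒱 be such that ‖T_W* f_r − T_W* f‖ ≤ ε ‖f‖. Then ‖f_r − P f‖ ≤ ε ‖T_V ∘ Q‖ ‖f‖. -/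
namespace ContinuousLinearMap

variable {𝕜 E F : Type*} [NontriviallyNormedField 𝕜]
  [SeminormedAddCommGroup E] [NormedSpace 𝕜 E] [SeminormedAddCommGroup F] [NormedSpace 𝕜 F]

theorem norm_sub_apply_le_of_comp_eq {A : E →L[𝕜] F} {B : F →L[𝕜] E} {P : E →L[𝕜] E}
    (hBA : B ∘L A = P) {x : E} (hx : P x = x) (y : E) :
    ‖x - P y‖ ≤ ‖B‖ * ‖A x - A y‖ := by
  have hreconstruct : x - P y = B (A x - A y) := by
    rw [map_sub, ← comp_apply, ← comp_apply, hBA, hx]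
  exact hreconstruct ▸ B.le_opNorm _

end ContinuousLinearMap

theorem consistent_reconstruction_error_bound_general
    {H : Type*} [NormedAddCommGroup H] [InnerProductSpace ℂ H] [CompleteSpace H]
    {I : Type*}
    (𝒱 : Submodule ℂ H)
    (P : H →L[ℂ] H) (hPidem : P ∘L P = P)
    (hPran : LinearMap.range (P : H →ₗ[ℂ] H) = 𝒱)
    (W : I → Submodule ℂ H) [∀ i, CompleteSpace (W i)]
    (TW : lp (fun i => W i) 2 →L[ℂ] H)
    (V : I → Submodule ℂ H)
    (TV : lp (fun i => V i) 2 →L[ℂ] H)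
    (Q : lp (fun i => W i) 2 →L[ℂ] lp (fun i => V i) 2)
    (hdual : TV ∘L Q ∘L ContinuousLinearMap.adjoint TW = P)
    (ε : ℝ) (f : H) (fr : H) (hfr : fr ∈ 𝒱)
    (hcons : ‖ContinuousLinearMap.adjoint TW fr - ContinuousLinearMap.adjoint TW f‖ ≤ ε * ‖f‖) :
    ‖fr - P f‖ ≤ ε * ‖TV ∘L Q‖ * ‖f‖ := by
  have hPfr : P fr = fr :=
    (LinearMap.IsIdempotentElem.mem_range_iff
      (ContinuousLinearMap.IsIdempotentElem.toLinearMap hPidem)).1 (hPran ▸ hfr)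
  calc ‖fr - P f‖
      ≤ ‖TV ∘L Q‖ * ‖ContinuousLinearMap.adjoint TW fr - ContinuousLinearMap.adjoint TW f‖ :=
        ContinuousLinearMap.norm_sub_apply_le_of_comp_eq (B := TV ∘L Q) hdual hPfr f
    _ ≤ ‖TV ∘L Q‖ * (ε * ‖f‖) := by gcongr
    _ = ε * ‖TV ∘L Q‖ * ‖f‖ := by ring

/-- Error bound for consistent reconstruction with an (exact) oblique `Q`-dual fusion frame:
if `T_V Q T_W* = P` and `f_r ∈ 𝒱` satisfies `‖T_W* f_r − T_W* f‖ ≤ ε ‖f‖`, then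
`‖f_r − P f‖ ≤ ε ‖T_V ∘ Q‖ ‖f‖`. -/
theorem consistent_reconstruction_error_bound
    {H : Type*} [NormedAddCommGroup H] [InnerProductSpace ℂ H] [CompleteSpace H]
    {I : Type*} [Countable I]
    (𝒱 𝒲 : Submodule ℂ H) [CompleteSpace 𝒱] [CompleteSpace 𝒲]
    (P : H →L[ℂ] H) (hPidem : P ∘L P = P)
    (hPran : LinearMap.range (P : H →ₗ[ℂ] H) = 𝒱) (hPker : LinearMap.ker (P : H →ₗ[ℂ] H) = 𝒲ᗮ)
    (W : I → Submodule ℂ H) [∀ i, CompleteSpace (W i)] (hW : ∀ i, W i ≤ 𝒲)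
    (w : I → ℝ) (hw : ∀ i, 0 < w i)
    (TW : lp (fun i => W i) 2 →L[ℂ] H)
    (hTW : ∀ g : lp (fun i => W i) 2, HasSum (fun i => (w i : ℂ) • (g i : H)) (TW g))
    (hWfr : LinearMap.range (TW : lp (fun i => W i) 2 →ₗ[ℂ] H) = 𝒲)
    (V : I → Submodule ℂ H) [∀ i, CompleteSpace (V i)] (hV : ∀ i, V i ≤ 𝒱)
    (v : I → ℝ) (hv : ∀ i, 0 < v i)
    (TV : lp (fun i => V i) 2 →L[ℂ] H)
    (hTV : ∀ g : lp (fun i => V i) 2, HasSum (fun i => (v i : ℂ) • (g i : H)) (TV g))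
    (hVfr : LinearMap.range (TV : lp (fun i => V i) 2 →ₗ[ℂ] H) = 𝒱)
    (Q : lp (fun i => W i) 2 →L[ℂ] lp (fun i => V i) 2)
    (hdual : TV ∘L Q ∘L ContinuousLinearMap.adjoint TW = P)
    (ε : ℝ) (hε : 0 ≤ ε) (f : H) (fr : H) (hfr : fr ∈ 𝒱)
    (hcons : ‖ContinuousLinearMap.adjoint TW fr - ContinuousLinearMap.adjoint TW f‖ ≤ ε * ‖f‖) :
    ‖fr - P f‖ ≤ ε * ‖TV ∘L Q‖ * ‖f‖ :=
  consistent_reconstruction_error_bound_general 𝒱 P hPidem hPran W TW V TV Q hdual ε f fr hfr hcons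
end

section
/- Let H be a complex Hilbert space, 𝒱 and 𝒲 closed subspaces with H = 𝒱 ⊕ 𝒲ᗮ, and P = π_{𝒱,𝒲ᗮ}. Let (W,w) be a fusion frame for 𝒲 with synthesis operator T_W (so T_W has closed range equal to 𝒲 and γ(T_W) > 0). Let ε ≥ 0, f ∈ H, and f_r ∈ 𝒱 with ‖T_W* f_r − T_W* f‖ ≤ ε ‖f‖. Then ‖f_r − P f‖ ≤ ε ‖P‖ γ(T_W)⁻¹ ‖f‖, where γ(T_W) = inf{‖T_W x‖ : ‖x‖ = 1, x ∈ (ker T_W)ᗮ} (so that γ(T_W)⁻¹ is the norm of the Moore–Penrose pseudoinverse of T_W). -/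
open scoped ENNReal
set_option synthInstance.maxHeartbeats 1000000
set_option maxHeartbeats 1000000
noncomputable section

/-!
Since `P` and `T_W*` both vanish on `𝒲ᗮ = (range T_W)ᗮ`, replacing `fr - f` by its orthogonal
projection `h` onto `𝒲` changes neither `P (fr - f) = fr - P f` nor `T_W* (fr - f)`. Writing
`h = T_W z` with `z ⊥ ker T_W` gives `‖h‖² = ⟪z, T_W* h⟫ ≤ ‖z‖ ‖T_W* h‖ ≤ γ⁻¹ ‖h‖ ‖T_W* h‖`, so
`‖h‖ ≤ γ⁻¹ ‖T_W* h‖`; here `γ = γ(T_W) > 0` because `T_W` has closed range.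
-/

namespace ContinuousLinearMap

variable {E F : Type*} [NormedAddCommGroup E] [InnerProductSpace ℂ E]
  [NormedAddCommGroup F] [InnerProductSpace ℂ F]

theorem redMinMod_nonneg (A : E →L[ℂ] F) : 0 ≤ redMinMod A :=
  Real.sInf_nonneg <| by rintro _ ⟨x, -, rfl⟩; exact norm_nonneg _

theorem redMinMod_mul_norm_le (A : E →L[ℂ] F) {x : E}
    (hx : x ∈ (LinearMap.ker (A : E →ₗ[ℂ] F))ᗮ) : redMinMod A * ‖x‖ ≤ ‖A x‖ := by
  rcases eq_or_ne x 0 with rfl | hx0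
  · simp
  have hxn : 0 < ‖x‖ := norm_pos_iff.mpr hx0
  have hmem : ‖A ((‖x‖ : ℂ)⁻¹ • x)‖ ∈
      (fun x => ‖A x‖) '' {x : E | ‖x‖ = 1 ∧ x ∈ (LinearMap.ker (A : E →ₗ[ℂ] F))ᗮ} :=
    ⟨_, ⟨by simp [norm_smul, hxn.ne'], Submodule.smul_mem _ _ hx⟩, rfl⟩
  have hle := csInf_le ⟨0, by rintro _ ⟨y, -, rfl⟩; exact norm_nonneg _⟩ hmem
  rw [map_smul, norm_smul, norm_inv, Complex.norm_real, norm_norm] at hle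
  rwa [← le_div_iff₀ hxn, div_eq_inv_mul]

theorem le_redMinMod {A : E →L[ℂ] F} {c : ℝ} {x₀ : E}
    (hx₀ : x₀ ∈ (LinearMap.ker (A : E →ₗ[ℂ] F))ᗮ) (hx₀0 : x₀ ≠ 0)
    (hc : ∀ x ∈ (LinearMap.ker (A : E →ₗ[ℂ] F))ᗮ, c * ‖x‖ ≤ ‖A x‖) : c ≤ redMinMod A := by
  have hn : 0 < ‖x₀‖ := norm_pos_iff.mpr hx₀0
  refine le_csInf ⟨_, (‖x₀‖ : ℂ)⁻¹ • x₀, ⟨by simp [norm_smul, hn.ne'], Submodule.smul_mem _ _ hx₀⟩,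
    rfl⟩ ?_
  rintro _ ⟨x, ⟨hx1, hx⟩, rfl⟩
  simpa [hx1] using hc x hx

theorem norm_le_of_mem_orthogonal_ker {A : E →L[ℂ] F} {x z : E}
    (hz : z ∈ (LinearMap.ker (A : E →ₗ[ℂ] F))ᗮ) (hxz : A x = A z) : ‖z‖ ≤ ‖x‖ := by
  have hk : x - z ∈ LinearMap.ker (A : E →ₗ[ℂ] F) := by simp [hxz]
  have hpyth := norm_add_sq_eq_norm_sq_add_norm_sq_of_inner_eq_zero z (x - z)
    ((Submodule.mem_orthogonal' _ _).mp hz _ hk)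
  rw [add_sub_cancel] at hpyth
  nlinarith [norm_nonneg x, norm_nonneg z, sq_nonneg ‖x - z‖]

variable [CompleteSpace E]

theorem exists_mem_orthogonal_ker_apply_eq (A : E →L[ℂ] F) (x : E) :
    ∃ z ∈ (LinearMap.ker (A : E →ₗ[ℂ] F))ᗮ, A z = A x := by
  refine ⟨x - A.ker.starProjection x, Submodule.sub_starProjection_mem_orthogonal x, ?_⟩
  have hk : A (A.ker.starProjection x) = 0 := A.ker.starProjection_apply_mem x
  rw [map_sub, hk, sub_zero]

variable [CompleteSpace F]

/-- By the open mapping theorem for `A` onto its closed range, `A x` has a preimage of norm at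
most `C * ‖A x‖`, and the preimage in `(ker A)ᗮ` is the shortest one. -/
theorem redMinMod_pos {A : E →L[ℂ] F} (hA : IsClosed (LinearMap.range (A : E →ₗ[ℂ] F) : Set F))
    (hA0 : A ≠ 0) : 0 < redMinMod A := by
  have := hA.completeSpace_coe
  obtain ⟨C, hC, hpre⟩ := exists_preimage_norm_le A.rangeRestrict A.surjective_rangeRestrict
  obtain ⟨x₀, hx₀⟩ : ∃ x, A x ≠ 0 := by
    by_contra! h
    exact hA0 (ext h)
  obtain ⟨z₀, hz₀, hAz₀⟩ := A.exists_mem_orthogonal_ker_apply_eq x₀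
  refine (inv_pos.mpr hC).trans_le (le_redMinMod hz₀ (by rintro rfl; simp_all) fun z hz => ?_)
  obtain ⟨x, hx, hxC⟩ := hpre (A.rangeRestrict z)
  have hxz : A x = A z := congrArg Subtype.val hx
  have hnorm : ‖A.rangeRestrict z‖ = ‖A z‖ := rfl
  rw [inv_mul_le_iff₀ hC, ← hnorm]
  exact (norm_le_of_mem_orthogonal_ker hz hxz).trans hxC

theorem redMinMod_mul_norm_le_norm_adjoint (A : E →L[ℂ] F) {y : F}
    (hy : y ∈ LinearMap.range (A : E →ₗ[ℂ] F)) : redMinMod A * ‖y‖ ≤ ‖adjoint A y‖ := by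
  obtain ⟨x, rfl⟩ := hy
  obtain ⟨z, hz, hAz⟩ := A.exists_mem_orthogonal_ker_apply_eq x
  have hγz : redMinMod A * ‖z‖ ≤ ‖A z‖ := A.redMinMod_mul_norm_le hz
  have hsq : ‖A z‖ ^ 2 ≤ ‖z‖ * ‖adjoint A (A z)‖ := by
    rw [← inner_self_eq_norm_sq (𝕜 := ℂ), ← adjoint_inner_right]
    exact (RCLike.re_le_norm _).trans (norm_inner_le_norm _ _)
  rw [coe_coe, ← hAz]
  rcases (norm_nonneg (A z)).eq_or_lt with h0 | hpos
  · rw [← h0, mul_zero]; exact norm_nonneg _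
  refine le_of_mul_le_mul_left ?_ hpos
  calc ‖A z‖ * (redMinMod A * ‖A z‖) = redMinMod A * ‖A z‖ ^ 2 := by ring
    _ ≤ redMinMod A * (‖z‖ * ‖adjoint A (A z)‖) := by gcongr; exact A.redMinMod_nonneg
    _ = (redMinMod A * ‖z‖) * ‖adjoint A (A z)‖ := by ring
    _ ≤ ‖A z‖ * ‖adjoint A (A z)‖ := by gcongr

theorem norm_le_redMinMod_inv_mul_norm_adjoint {A : E →L[ℂ] F}
    (hA : IsClosed (LinearMap.range (A : E →ₗ[ℂ] F) : Set F)) {y : F}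
    (hy : y ∈ LinearMap.range (A : E →ₗ[ℂ] F)) : ‖y‖ ≤ (redMinMod A)⁻¹ * ‖adjoint A y‖ := by
  rcases eq_or_ne A 0 with rfl | hA0
  · obtain ⟨x, rfl⟩ := hy
    simp
  rw [← div_eq_inv_mul, le_div_iff₀' (redMinMod_pos hA hA0)]
  exact A.redMinMod_mul_norm_le_norm_adjoint hy

theorem norm_apply_le_redMinMod_inv_mul_norm_adjoint {A : E →L[ℂ] F}
    (hA : IsClosed (LinearMap.range (A : E →ₗ[ℂ] F) : Set F)) (P : F →L[ℂ] F)
    (hP : LinearMap.ker (P : F →ₗ[ℂ] F) = (LinearMap.range (A : E →ₗ[ℂ] F))ᗮ) (g : F) :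
    ‖P g‖ ≤ ‖P‖ * (redMinMod A)⁻¹ * ‖adjoint A g‖ := by
  have := hA.completeSpace_coe
  set h := A.range.starProjection g
  have hgh : g - h ∈ (LinearMap.range (A : E →ₗ[ℂ] F))ᗮ :=
    A.range.sub_starProjection_mem_orthogonal g
  have hPg : P g = P h := by
    rw [← sub_eq_zero, ← map_sub]
    exact LinearMap.mem_ker.mp (hP ▸ hgh)
  have hAg : adjoint A g = adjoint A h := by
    rw [← sub_eq_zero, ← map_sub]
    exact LinearMap.mem_ker.mp (A.orthogonal_range ▸ hgh)
  calc ‖P g‖ = ‖P h‖ := by rw [hPg]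
    _ ≤ ‖P‖ * ‖h‖ := P.le_opNorm h
    _ ≤ ‖P‖ * ((redMinMod A)⁻¹ * ‖adjoint A h‖) := by
      gcongr
      exact norm_le_redMinMod_inv_mul_norm_adjoint hA (A.range.starProjection_apply_mem g)
    _ = ‖P‖ * (redMinMod A)⁻¹ * ‖adjoint A g‖ := by rw [hAg, mul_assoc]

end ContinuousLinearMap

theorem consistent_reconstruction_error_bound_canonical_general
    {H : Type*} [NormedAddCommGroup H] [InnerProductSpace ℂ H] [CompleteSpace H]
    {I : Type*}
    (𝒱 𝒲 : Submodule ℂ H) [CompleteSpace 𝒲]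
    (P : H →L[ℂ] H) (hPidem : P ∘L P = P)
    (hPran : LinearMap.range (P : H →ₗ[ℂ] H) = 𝒱) (hPker : LinearMap.ker (P : H →ₗ[ℂ] H) = 𝒲ᗮ)
    (W : I → Submodule ℂ H) [∀ i, CompleteSpace (W i)]
    (TW : lp (fun i => W i) 2 →L[ℂ] H)
    (hWfr : LinearMap.range (TW : lp (fun i => W i) 2 →ₗ[ℂ] H) = 𝒲)
    (ε : ℝ) (f : H) (fr : H) (hfr : fr ∈ 𝒱)
    (hcons : ‖ContinuousLinearMap.adjoint TW fr - ContinuousLinearMap.adjoint TW f‖ ≤ ε * ‖f‖) :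
    ‖fr - P f‖ ≤ ε * ‖P‖ * (redMinMod TW)⁻¹ * ‖f‖ := by
  have hPfr : P fr = fr := by
    obtain ⟨y, rfl⟩ := hPran ▸ hfr
    exact congr($hPidem y)
  have hclosed : IsClosed (LinearMap.range (TW : lp (fun i => W i) 2 →ₗ[ℂ] H) : Set H) :=
    hWfr ▸ (completeSpace_coe_iff_isComplete.mp ‹_›).isClosed
  have hγ : 0 ≤ (redMinMod TW)⁻¹ := inv_nonneg.mpr TW.redMinMod_nonneg
  calc ‖fr - P f‖ = ‖P (fr - f)‖ := by rw [map_sub, hPfr]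
    _ ≤ ‖P‖ * (redMinMod TW)⁻¹ * ‖ContinuousLinearMap.adjoint TW (fr - f)‖ :=
      ContinuousLinearMap.norm_apply_le_redMinMod_inv_mul_norm_adjoint hclosed P (hWfr ▸ hPker) _
    _ ≤ ‖P‖ * (redMinMod TW)⁻¹ * (ε * ‖f‖) := by rw [map_sub]; gcongr
    _ = ε * ‖P‖ * (redMinMod TW)⁻¹ * ‖f‖ := by ring

/-- If `(W,w)` is a fusion frame for `𝒲` and `f_r ∈ 𝒱` is an `ε`-consistent reconstruction
of `f`, then `‖f_r − P f‖ ≤ ε ‖P‖ γ(T_W)⁻¹ ‖f‖`, where `γ(T_W)⁻¹` is the norm of the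
Moore–Penrose pseudoinverse of `T_W`. -/
theorem consistent_reconstruction_error_bound_canonical
    {H : Type*} [NormedAddCommGroup H] [InnerProductSpace ℂ H] [CompleteSpace H]
    {I : Type*} [Countable I]
    (𝒱 𝒲 : Submodule ℂ H) [CompleteSpace 𝒱] [CompleteSpace 𝒲]
    (P : H →L[ℂ] H) (hPidem : P ∘L P = P)
    (hPran : LinearMap.range (P : H →ₗ[ℂ] H) = 𝒱) (hPker : LinearMap.ker (P : H →ₗ[ℂ] H) = 𝒲ᗮ)
    (W : I → Submodule ℂ H) [∀ i, CompleteSpace (W i)] (hW : ∀ i, W i ≤ 𝒲)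
    (w : I → ℝ) (hw : ∀ i, 0 < w i)
    (TW : lp (fun i => W i) 2 →L[ℂ] H)
    (hTW : ∀ g : lp (fun i => W i) 2, HasSum (fun i => (w i : ℂ) • (g i : H)) (TW g))
    (hWfr : LinearMap.range (TW : lp (fun i => W i) 2 →ₗ[ℂ] H) = 𝒲)
    (ε : ℝ) (hε : 0 ≤ ε) (f : H) (fr : H) (hfr : fr ∈ 𝒱)
    (hcons : ‖ContinuousLinearMap.adjoint TW fr - ContinuousLinearMap.adjoint TW f‖ ≤ ε * ‖f‖) :
    ‖fr - P f‖ ≤ ε * ‖P‖ * (redMinMod TW)⁻¹ * ‖f‖ :=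
  consistent_reconstruction_error_bound_canonical_general 𝒱 𝒲 P hPidem hPran hPker W TW hWfr ε f fr
    hfr hcons
end
end
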